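/- arXiv:2510.18450 — 4 statements merged into one kernel-verified Lean document; each statement's English description precedes it below -/
import Mathlib

section
/- Let n ≥ 3 and c = 1, fix ω_0 ∈ S^{n−1} and δ > 0, and let f ∈ C_c^∞(ℝ^{1+n}; S^1) be a smooth compactly supported vector field (1-tensor field) on ℝ^{1+n}. If L̃^{1,k} f((t,x), ω) = 0 for k = 0 and k = 1, for all (t,x) ∈ ℝ^{1+n} and all ω ∈ B_n(ω_0, δ), then the Fourier transform of f vanishes on the open set H_n: f̂_j(ζ) = 0 for every ζ ∈ H_n and every j ∈ {0,…,n}. -/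
open MeasureTheory Finset

noncomputable section

/-- The light direction `ω̃ = (c, ω) ∈ ℝ^{1+n}`. -/
def ld (n : ℕ) (c : ℝ) (ω : Fin n → ℝ) : Fin (n + 1) → ℝ := Fin.cons c ω

/-- The `k`-th momentum light ray transform of a rank-`m` symmetric tensor field,
`L^{m,k} f((t,x), ω) = Σ ω̃_{i_1}⋯ω̃_{i_m} ∫ s^k f_{i_1…i_m}((t,x) + s ω̃) ds`. -/
def mlrt (n m : ℕ) (c : ℝ) (k : ℕ)
    (f : (Fin m → Fin (n + 1)) → (Fin (n + 1) → ℝ) → ℂ)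
    (x : Fin (n + 1) → ℝ) (ω : Fin n → ℝ) : ℂ :=
  ∑ i : Fin m → Fin (n + 1),
    (∏ j, (ld n c ω (i j) : ℂ)) *
      ∫ s : ℝ, (s : ℂ) ^ k * f i (x + s • ld n c ω)

/-- A tensor field is symmetric: invariant under permutations of its indices. -/
def IsSymmF (n m : ℕ) (f : (Fin m → Fin (n + 1)) → (Fin (n + 1) → ℝ) → ℂ) : Prop :=
  ∀ (σ : Equiv.Perm (Fin m)) (i : Fin m → Fin (n + 1)), f (i ∘ σ) = f i

/-- All components are smooth and compactly supported. -/
def IsCc (n m : ℕ) (f : (Fin m → Fin (n + 1)) → (Fin (n + 1) → ℝ) → ℂ) : Prop :=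
  ∀ i, ContDiff ℝ (⊤ : ℕ∞) (f i) ∧ HasCompactSupport (f i)

/-- `ω ∈ S^{n-1}` (Euclidean unit sphere). -/
def onSphere (n : ℕ) (ω : Fin n → ℝ) : Prop := ∑ i, ω i ^ 2 = 1

/-- `ω ∈ B_n(ω₀, δ)`: on the sphere and at Euclidean distance `< δ` from `ω₀`. -/
def inBall (n : ℕ) (ω₀ : Fin n → ℝ) (δ : ℝ) (ω : Fin n → ℝ) : Prop :=
  onSphere n ω ∧ ∑ i, (ω i - ω₀ i) ^ 2 < δ ^ 2

/-- The Fourier transform on `ℝ^{1+n}`: `ĥ(ζ) = ∫ h(y) e^{−i y·ζ} dy`. -/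
def ftrans (n : ℕ) (h : (Fin (n + 1) → ℝ) → ℂ) (ζ : Fin (n + 1) → ℝ) : ℂ :=
  ∫ y : Fin (n + 1) → ℝ, h y * Complex.exp (-Complex.I * ((∑ i, y i * ζ i : ℝ) : ℂ))

/-- The `k`-th momentum light ray transform of a vector field (with `c = 1`). -/
def lrtVec (n : ℕ) (k : ℕ) (f : Fin (n + 1) → (Fin (n + 1) → ℝ) → ℂ)
    (x : Fin (n + 1) → ℝ) (ω : Fin n → ℝ) : ℂ :=
  ∑ j, (ld n 1 ω j : ℂ) * ∫ s : ℝ, (s : ℂ) ^ k * f j (x + s • ld n 1 ω)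

/-- `ζ = (ζ₀, ζ') ∈ H_n`: `|ζ₀| < |ζ'|` and `ζ ⊥ (1, ω)` for some `ω ∈ B_n(ω₀, δ)`. -/
def memHn (n : ℕ) (ω₀ : Fin n → ℝ) (δ : ℝ) (ζ : Fin (n + 1) → ℝ) : Prop :=
  (ζ 0) ^ 2 < ∑ p : Fin n, (ζ p.succ) ^ 2 ∧
    ∃ ω : Fin n → ℝ, inBall n ω₀ δ ω ∧ ∑ i, ζ i * ld n 1 ω i = 0

/-- The shear+insert map `(s, x') ↦ (s, x' + sω)` as a homeomorphism onto `ℝ^{1+n}`. -/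
def lightMap (n : ℕ) (ω : Fin n → ℝ) : (ℝ × (Fin n → ℝ)) ≃ₜ (Fin (n + 1) → ℝ) where
  toFun p := Fin.cons p.1 (p.2 + p.1 • ω)
  invFun y := (y 0, fun p => y p.succ - y 0 * ω p)
  left_inv := by
    rintro ⟨s, x⟩
    simp [funext_iff]
  right_inv := by
    intro y
    funext i
    refine Fin.cases ?_ ?_ i <;> simp
  continuous_toFun := by
    apply continuous_pi
    intro i
    refine Fin.cases ?_ ?_ i
    · simpa using continuous_fst
    · intro p
      have : Continuous fun q : ℝ × (Fin n → ℝ) => q.2 p + q.1 * ω p :=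
        ((continuous_apply p).comp continuous_snd).add (continuous_fst.mul continuous_const)
      simpa using this
  continuous_invFun := by
    refine Continuous.prodMk (continuous_apply 0) ?_
    exact continuous_pi fun p => (continuous_apply p.succ).sub ((continuous_apply 0).mul continuous_const)

lemma lightMap_mp (n : ℕ) (ω : Fin n → ℝ) :
    MeasurePreserving (lightMap n ω) (volume.prod volume) volume := by
  have h1 : MeasurePreserving (fun p : ℝ × (Fin n → ℝ) => (p.1, p.2 + p.1 • ω))
      (volume.prod volume) (volume.prod volume) := by
    refine MeasurePreserving.skew_product (g := fun (s : ℝ) (y : Fin n → ℝ) => y + s • ω) (μc := volume) (μd := volume) (MeasurePreserving.id (volume : Measure ℝ)) ?_ (ae_of_all _ fun s => ?_)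
    · exact (continuous_snd.add (continuous_fst.smul continuous_const)).measurable
    · exact map_add_right_eq_self volume (s • ω)
  have e := MeasurableEquiv.piFinSuccAbove (fun _ : Fin (n + 1) => ℝ) 0
  have h2 := ((volume_preserving_piFinSuccAbove (fun _ : Fin (n + 1) => ℝ) 0).symm _).comp h1
  convert h2 using 1
  · rfl
  funext p
  show Fin.cons p.1 (p.2 + p.1 • ω) = (MeasurableEquiv.piFinSuccAbove (fun _ : Fin (n + 1) => ℝ) 0).symm _
  funext i
  refine Fin.cases ?_ ?_ i
  · rw [show (MeasurableEquiv.piFinSuccAbove (fun _ : Fin (n + 1) => ℝ) 0).symm (p.1, p.2 + p.1 • ω) = Fin.insertNth 0 p.1 (p.2 + p.1 • ω) from rfl]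
    simp
  · intro p'
    rw [show (MeasurableEquiv.piFinSuccAbove (fun _ : Fin (n + 1) => ℝ) 0).symm (p.1, p.2 + p.1 • ω) = Fin.insertNth 0 p.1 (p.2 + p.1 • ω) from rfl]
    have h3 : (0 : Fin (n + 1)).succAbove p' = p'.succ := by simp
    rw [Fin.cons_succ, ← h3, Fin.insertNth_apply_succAbove]

/-- key pointwise identity -/
lemma lightMap_eq (n : ℕ) (ω : Fin n → ℝ) (p : ℝ × (Fin n → ℝ)) :
    lightMap n ω p = Fin.cons 0 p.2 + p.1 • (Fin.cons 1 ω : Fin (n+1) → ℝ) := by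
  funext i
  refine Fin.cases ?_ ?_ i
  · simp [lightMap]
  · intro q
    simp [lightMap]

lemma integrable_aux (n : ℕ) (ω : Fin n → ℝ) {g : (Fin (n + 1) → ℝ) → ℂ}
    (hg : Continuous g) (hgs : HasCompactSupport g) (k : ℕ) {E : (Fin n → ℝ) → ℂ}
    (hE : Continuous E) :
    Integrable (fun p : ℝ × (Fin n → ℝ) => E p.2 * ((p.1 : ℂ) ^ k * g (lightMap n ω p)))
      (volume.prod volume) := by
  have hcont : Continuous fun p : ℝ × (Fin n → ℝ) =>
      E p.2 * ((p.1 : ℂ) ^ k * g (lightMap n ω p)) := by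
    exact (hE.comp continuous_snd).mul
      (((Complex.continuous_ofReal.comp continuous_fst).pow k).mul
        (hg.comp (lightMap n ω).continuous))
  have hcs : HasCompactSupport fun p : ℝ × (Fin n → ℝ) => g (lightMap n ω p) :=
    hgs.comp_homeomorph (lightMap n ω)
  have hcs2 : HasCompactSupport fun p : ℝ × (Fin n → ℝ) =>
      E p.2 * ((p.1 : ℂ) ^ k * g (lightMap n ω p)) := by
    have h1 : HasCompactSupport fun p : ℝ × (Fin n → ℝ) =>
        (p.1 : ℂ) ^ k * g (lightMap n ω p) := HasCompactSupport.mul_left hcs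
    exact HasCompactSupport.mul_left h1
  exact hcont.integrable_of_hasCompactSupport hcs2

lemma sliceId (n : ℕ) (k : ℕ) (f : Fin (n + 1) → (Fin (n + 1) → ℝ) → ℂ)
    (hreg : ∀ j, Continuous (f j) ∧ HasCompactSupport (f j))
    (ω : Fin n → ℝ)
    (hk : ∀ x : Fin (n + 1) → ℝ,
      ∑ j, (ld n 1 ω j : ℂ) * ∫ s : ℝ, (s : ℂ) ^ k * f j (x + s • ld n 1 ω) = 0)
    (ξ : Fin (n + 1) → ℝ) (hperp : ∑ i, ξ i * ld n 1 ω i = 0) :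
    ∑ j, (ld n 1 ω j : ℂ) *
      ∫ y : Fin (n + 1) → ℝ, (y 0 : ℂ) ^ k * f j y *
        Complex.exp (-Complex.I * ((∑ i, y i * ξ i : ℝ) : ℂ)) = 0 := by
  classical
  set E : (Fin n → ℝ) → ℂ :=
    fun x' => Complex.exp (-Complex.I * ((∑ p : Fin n, x' p * ξ p.succ : ℝ) : ℂ)) with hE
  have hEcont : Continuous E := by
    apply Complex.continuous_exp.comp
    apply Continuous.mul continuous_const
    exact Complex.continuous_ofReal.comp (continuous_finset_sum _ fun p _ =>
      (continuous_apply p).mul continuous_const)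
  set G : Fin (n + 1) → (ℝ × (Fin n → ℝ)) → ℂ :=
    fun j p => E p.2 * ((p.1 : ℂ) ^ k * f j (lightMap n ω p)) with hG
  have hint : ∀ j, Integrable (G j) (volume.prod volume) := fun j =>
    integrable_aux n ω (hreg j).1 (hreg j).2 k hEcont
  -- pointwise vanishing of the inner integral
  have hzero : ∀ x' : Fin n → ℝ, ∑ j, (ld n 1 ω j : ℂ) * ∫ s : ℝ, G j (s, x') = 0 := by
    intro x'
    have h1 : ∀ j, (∫ s : ℝ, G j (s, x')) =
        E x' * ∫ s : ℝ, (s : ℂ) ^ k * f j (Fin.cons 0 x' + s • ld n 1 ω) := by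
      intro j
      rw [← integral_const_mul]
      congr 1
      funext s
      rw [hG]
      simp only []
      rw [lightMap_eq n ω (s, x')]
      rfl
    calc ∑ j, (ld n 1 ω j : ℂ) * ∫ s : ℝ, G j (s, x')
        = E x' * ∑ j, (ld n 1 ω j : ℂ) *
            ∫ s : ℝ, (s : ℂ) ^ k * f j (Fin.cons 0 x' + s • ld n 1 ω) := by
          rw [Finset.mul_sum]; congr 1; funext j; rw [h1 j]; ring
      _ = 0 := by rw [hk (Fin.cons 0 x')]; ring
  -- the swapped functions are integrable
  have hswap : ∀ j, Integrable (fun q : (Fin n → ℝ) × ℝ => G j (q.2, q.1))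
      (volume.prod volume) := by
    intro j
    have := (hint j).swap
    exact this
  -- main computation
  have key : ∀ j, (∫ x' : Fin n → ℝ, ∫ s : ℝ, G j (s, x')) = ∫ p, G j p ∂(volume.prod volume) := by
    intro j
    have h2 : (∫ x' : Fin n → ℝ, ∫ s : ℝ, G j (s, x')) = ∫ s : ℝ, ∫ x' : Fin n → ℝ, G j (s, x') := by
      exact integral_integral_swap (hswap j)
    rw [h2]
    exact integral_integral (hint j)
  have main : ∑ j, (ld n 1 ω j : ℂ) * ∫ p, G j p ∂(volume.prod volume) = 0 := by
    have h0 : (∫ x' : Fin n → ℝ, ∑ j, (ld n 1 ω j : ℂ) * ∫ s : ℝ, G j (s, x')) = 0 := by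
      simp only [hzero]
      exact integral_zero _ _
    have h1 : (∫ x' : Fin n → ℝ, ∑ j, (ld n 1 ω j : ℂ) * ∫ s : ℝ, G j (s, x'))
        = ∑ j, (ld n 1 ω j : ℂ) * ∫ x' : Fin n → ℝ, ∫ s : ℝ, G j (s, x') := by
      rw [integral_finset_sum]
      · congr 1; funext j; rw [integral_const_mul]
      · intro j _
        exact ((hint j).integral_prod_right).const_mul _
    rw [h1] at h0
    rw [← h0]
    exact Finset.sum_congr rfl fun j _ => by rw [key j]
  -- change of variables
  have cov : ∀ j, (∫ p, G j p ∂(volume.prod volume)) =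
      ∫ y : Fin (n + 1) → ℝ, (y 0 : ℂ) ^ k * f j y *
        Complex.exp (-Complex.I * ((∑ i, y i * ξ i : ℝ) : ℂ)) := by
    intro j
    set H : (Fin (n + 1) → ℝ) → ℂ := fun y =>
      E (fun q => y q.succ - y 0 * ω q) * ((y 0 : ℂ) ^ k * f j y) with hH
    have hGH : G j = fun p => H (lightMap n ω p) := by
      funext p
      rw [hG, hH]
      simp only []
      have e1 : (lightMap n ω p) 0 = p.1 := by simp [lightMap]
      have e2 : (fun q => (lightMap n ω p) q.succ - p.1 * ω q) = p.2 := by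
        funext q; simp [lightMap]
      rw [e1, e2]
    have h3 : (∫ p, G j p ∂(volume.prod volume)) = ∫ y, H y := by
      rw [hGH]
      exact (lightMap_mp n ω).integral_comp
        (lightMap n ω).toMeasurableEquiv.measurableEmbedding H
    rw [h3]
    congr 1
    funext y
    rw [hH]
    simp only []
    have hsum : (∑ p : Fin n, (y p.succ - y 0 * ω p) * ξ p.succ) = ∑ i, y i * ξ i := by
      have hperp' : ξ 0 + ∑ p : Fin n, ξ p.succ * ω p = 0 := by
        rw [Fin.sum_univ_succ] at hperp
        simpa [ld] using hperp
      have expand : ∑ p : Fin n, (y p.succ - y 0 * ω p) * ξ p.succ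
          = (∑ p : Fin n, y p.succ * ξ p.succ) - y 0 * ∑ p : Fin n, ξ p.succ * ω p := by
        rw [Finset.mul_sum, ← Finset.sum_sub_distrib]
        exact Finset.sum_congr rfl fun p _ => by ring
      have h0' : ∑ p : Fin n, ξ p.succ * ω p = -ξ 0 := by linarith
      rw [expand, Fin.sum_univ_succ, h0']
      ring
    rw [hE]
    simp only []
    rw [hsum]
    ring
  rw [← main]
  congr 1; funext j; rw [cov j]

lemma norm_myexp (r : ℝ) : ‖Complex.exp (-Complex.I * (r : ℂ))‖ = 1 := by
  have : -Complex.I * (r : ℂ) = (-r : ℝ) * Complex.I := by push_cast; ring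
  rw [this]
  exact Complex.norm_exp_ofReal_mul_I _

lemma deriv_fhat (n : ℕ) (g : (Fin (n + 1) → ℝ) → ℂ) (hg : Continuous g)
    (hgs : HasCompactSupport g) (ζ : Fin (n + 1) → ℝ) :
    HasDerivAt (fun τ : ℝ => ∫ y : Fin (n + 1) → ℝ,
        g y * Complex.exp (-Complex.I *
          ((∑ i, y i * (ζ i + τ * (if i = 0 then 1 else 0)) : ℝ) : ℂ)))
      (∫ y : Fin (n + 1) → ℝ,
        (-Complex.I * (y 0 : ℂ)) *
          (g y * Complex.exp (-Complex.I * ((∑ i, y i * ζ i : ℝ) : ℂ)))) 0 := by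
  classical
  have hlin : ∀ (τ : ℝ) (y : Fin (n + 1) → ℝ),
      (∑ i, y i * (ζ i + τ * (if i = 0 then 1 else 0)) : ℝ)
        = (∑ i, y i * ζ i) + τ * y 0 := by
    intro τ y
    have h1 : ∀ i : Fin (n + 1), y i * (ζ i + τ * (if i = 0 then 1 else 0))
        = y i * ζ i + (if i = (0 : Fin (n + 1)) then τ * y i else 0) := by
      intro i; by_cases h : i = 0 <;> simp [h] <;> ring
    rw [Finset.sum_congr rfl fun i _ => h1 i, Finset.sum_add_distrib]
    simp [mul_comm]
  set F : ℝ → (Fin (n + 1) → ℝ) → ℂ := fun τ y =>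
    g y * Complex.exp (-Complex.I * (((∑ i, y i * ζ i) + τ * y 0 : ℝ) : ℂ)) with hF
  set F' : ℝ → (Fin (n + 1) → ℝ) → ℂ := fun τ y => (-Complex.I * (y 0 : ℂ)) * F τ y with hF'
  have hFcont : ∀ τ, Continuous (F τ) := by
    intro τ
    apply hg.mul
    apply Complex.continuous_exp.comp
    apply continuous_const.mul
    exact Complex.continuous_ofReal.comp ((continuous_finset_sum _ fun i _ =>
      (continuous_apply i).mul continuous_const).add (continuous_const.mul (continuous_apply 0)))
  have hbint : Integrable (fun y : Fin (n + 1) → ℝ => ‖g y‖ * |y 0|) volume := by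
    apply Continuous.integrable_of_hasCompactSupport
    · exact (hg.norm).mul (continuous_apply 0).abs
    · exact (hgs.norm).mul_right
  have hderiv : ∀ (y : Fin (n + 1) → ℝ) (τ : ℝ), HasDerivAt (F · y) (F' τ y) τ := by
    intro y τ
    have h2 : HasDerivAt (fun z : ℂ =>
        -Complex.I * (((∑ i, y i * ζ i : ℝ) : ℂ) + z * (y 0 : ℂ)))
        (-Complex.I * (y 0 : ℂ)) (τ : ℂ) := by
      simpa using (((hasDerivAt_id (τ : ℂ)).mul_const ((y 0 : ℝ) : ℂ)).const_add
        (((∑ i, y i * ζ i : ℝ) : ℂ))).const_mul (-Complex.I)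
    have h3 := (h2.cexp.comp_ofReal).const_mul (g y)
    have hfun : (fun t : ℝ => g y * Complex.exp (-Complex.I *
        (((∑ i, y i * ζ i : ℝ) : ℂ) + (t : ℂ) * ((y 0 : ℝ) : ℂ)))) = (F · y) := by
      funext t
      rw [hF]
      simp only []
      congr 2
      push_cast
      ring
    have hval : g y * (Complex.exp (-Complex.I * (((∑ i, y i * ζ i : ℝ) : ℂ)
        + (τ : ℂ) * ((y 0 : ℝ) : ℂ))) * (-Complex.I * ((y 0 : ℝ) : ℂ))) = F' τ y := by
      rw [hF', hF]
      simp only []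
      push_cast
      ring
    rw [hfun, hval] at h3
    exact h3
  have key := hasDerivAt_integral_of_dominated_loc_of_deriv_le (F := F) (F' := F')
    (μ := (volume : Measure (Fin (n + 1) → ℝ))) (x₀ := (0 : ℝ))
    (bound := fun y => ‖g y‖ * |y 0|) (Metric.ball_mem_nhds 0 zero_lt_one)
    (Filter.Eventually.of_forall fun τ => (hFcont τ).aestronglyMeasurable)
    (((hFcont 0).integrable_of_hasCompactSupport (hgs.mul_right)))
    (by
      apply Continuous.aestronglyMeasurable
      exact (continuous_const.mul (Complex.continuous_ofReal.comp (continuous_apply 0))).mul (hFcont 0))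
    (ae_of_all _ fun y τ _ => by
      have h4 : ‖F τ y‖ = ‖g y‖ := by
        rw [hF]
        simp only []
        rw [norm_mul, norm_myexp, mul_one]
      have h5 : ‖F' τ y‖ = |y 0| * ‖g y‖ := by
        rw [hF']
        simp only []
        rw [norm_mul, h4, norm_mul, norm_neg, Complex.norm_I, one_mul,
          Complex.norm_real, Real.norm_eq_abs]
      rw [h5]
      exact le_of_eq (mul_comm _ _))
    hbint
    (ae_of_all _ fun y τ _ => hderiv y τ)
  obtain ⟨-, key2⟩ := key
  have e1 : (fun τ : ℝ => ∫ y : Fin (n + 1) → ℝ,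
      g y * Complex.exp (-Complex.I *
        ((∑ i, y i * (ζ i + τ * (if i = 0 then 1 else 0)) : ℝ) : ℂ)))
      = fun τ => ∫ y, F τ y := by
    funext τ
    congr 1
    funext y
    rw [hF]
    simp only [hlin τ y]
  rw [e1]
  convert key2 using 1
  congr 1
  congr 1
  funext y
  rw [hF', hF]
  simp

def dotn {n : ℕ} (a b : Fin n → ℝ) : ℝ := ∑ p, a p * b p

lemma exists_unit_perp (n : ℕ) (hn : 3 ≤ n) (a b : Fin n → ℝ) :
    ∃ e : Fin n → ℝ, dotn e e = 1 ∧ dotn a e = 0 ∧ dotn b e = 0 := by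
  classical
  let a' : EuclideanSpace ℝ (Fin n) := WithLp.toLp 2 a
  let b' : EuclideanSpace ℝ (Fin n) := WithLp.toLp 2 b
  set K : Submodule ℝ (EuclideanSpace ℝ (Fin n)) := Submodule.span ℝ {a', b'} with hK
  have hcard : Module.finrank ℝ K ≤ 2 := by
    have h1 : Module.finrank ℝ K ≤ ({a', b'} : Set (EuclideanSpace ℝ (Fin n))).toFinset.card :=
      finrank_span_le_card _
    refine le_trans h1 ?_
    have : ({a', b'} : Set (EuclideanSpace ℝ (Fin n))).toFinset ⊆ {a', b'} := by
      intro x hx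
      simpa using hx
    calc _ ≤ ({a', b'} : Finset (EuclideanSpace ℝ (Fin n))).card := Finset.card_le_card this
    _ ≤ 2 := Finset.card_insert_le _ _ |>.trans (by simp)
  have hKne : K ≠ ⊤ := by
    intro hTop
    rw [hTop, finrank_top] at hcard
    have hdim : Module.finrank ℝ (EuclideanSpace ℝ (Fin n)) = n := by simp
    omega
  have hbot : Kᗮ ≠ ⊥ := by
    intro hb
    exact hKne ((Submodule.orthogonal_eq_bot_iff).mp hb)
  obtain ⟨v, hvK, hv0⟩ := Submodule.exists_mem_ne_zero_of_ne_bot hbot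
  refine ⟨(‖v‖⁻¹ : ℝ) • (v : Fin n → ℝ), ?_, ?_, ?_⟩
  · have hvv : dotn (v : Fin n → ℝ) (v : Fin n → ℝ) = ‖v‖ ^ 2 := by
      rw [EuclideanSpace.norm_eq, Real.sq_sqrt (Finset.sum_nonneg fun i _ => sq_nonneg _)]
      unfold dotn
      refine Finset.sum_congr rfl fun i _ => ?_
      rw [Real.norm_eq_abs, sq_abs, sq]
    have hnv : ‖v‖ ≠ 0 := norm_ne_zero_iff.mpr hv0
    simp only [dotn, PiLp.smul_apply, Pi.smul_apply, smul_eq_mul]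
    have : ∀ p, ‖v‖⁻¹ * v p * (‖v‖⁻¹ * v p) = ‖v‖⁻¹ ^ 2 * (v p * v p) := fun p => by ring
    rw [Finset.sum_congr rfl fun p _ => this p, ← Finset.mul_sum]
    have : (∑ p, v p * v p) = ‖v‖ ^ 2 := hvv
    rw [this]
    field_simp
  · have : dotn a (v : Fin n → ℝ) = 0 := by
      have h2 : inner ℝ a' v = (0 : ℝ) :=
        (Submodule.mem_orthogonal _ _).mp hvK a' (Submodule.subset_span (Set.mem_insert _ _))
      simpa [a', dotn, PiLp.inner_apply, RCLike.inner_apply, mul_comm] using h2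
    simp only [dotn, PiLp.smul_apply, Pi.smul_apply, smul_eq_mul]
    have h3 : ∀ p, a p * (‖v‖⁻¹ * v p) = ‖v‖⁻¹ * (a p * v p) := fun p => by ring
    rw [Finset.sum_congr rfl fun p _ => h3 p, ← Finset.mul_sum]
    simp [dotn] at this
    rw [this, mul_zero]
  · have : dotn b (v : Fin n → ℝ) = 0 := by
      have h2 : inner ℝ b' v = (0 : ℝ) :=
        (Submodule.mem_orthogonal _ _).mp hvK b'
          (Submodule.subset_span (Set.mem_insert_of_mem _ rfl))
      simpa [b', dotn, PiLp.inner_apply, RCLike.inner_apply, mul_comm] using h2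
    simp only [dotn, PiLp.smul_apply, Pi.smul_apply, smul_eq_mul]
    have h3 : ∀ p, b p * (‖v‖⁻¹ * v p) = ‖v‖⁻¹ * (b p * v p) := fun p => by ring
    rw [Finset.sum_congr rfl fun p _ => h3 p, ← Finset.mul_sum]
    simp [dotn] at this
    rw [this, mul_zero]


lemma dotn_expand {n : ℕ} (c u e : Fin n → ℝ) (a b : ℝ) :
    dotn (c + a • u + b • e) (c + a • u + b • e)
      = dotn c c + a ^ 2 * dotn u u + b ^ 2 * dotn e e
        + 2 * a * dotn c u + 2 * b * dotn c e + 2 * (a * b) * dotn u e := by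
  unfold dotn
  have h : ∀ p : Fin n, (c + a • u + b • e) p * (c + a • u + b • e) p
      = c p * c p + a ^ 2 * (u p * u p) + b ^ 2 * (e p * e p)
        + 2 * a * (c p * u p) + 2 * b * (c p * e p) + 2 * (a * b) * (u p * e p) := by
    intro p
    simp only [Pi.add_apply, Pi.smul_apply, smul_eq_mul]
    ring
  rw [Finset.sum_congr rfl fun p _ => h p]
  simp only [Finset.sum_add_distrib, ← Finset.mul_sum]

lemma dotn_linear {n : ℕ} (w c u e : Fin n → ℝ) (a b : ℝ) :
    dotn w (c + a • u + b • e) = dotn w c + a * dotn w u + b * dotn w e := by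
  unfold dotn
  have h : ∀ p : Fin n, w p * (c + a • u + b • e) p
      = w p * c p + a * (w p * u p) + b * (w p * e p) := by
    intro p
    simp only [Pi.add_apply, Pi.smul_apply, smul_eq_mul]
    ring
  rw [Finset.sum_congr rfl fun p _ => h p]
  simp only [Finset.sum_add_distrib, ← Finset.mul_sum]

lemma sum_cast_expand (n : ℕ) (F : Fin (n + 1) → ℂ) (c u e : Fin n → ℝ) (a b : ℝ) :
    ∑ p : Fin n, (((c + a • u + b • e) p : ℝ) : ℂ) * F p.succ
      = (∑ p : Fin n, ((c p : ℝ) : ℂ) * F p.succ)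
        + (a : ℂ) * (∑ p : Fin n, ((u p : ℝ) : ℂ) * F p.succ)
        + (b : ℂ) * (∑ p : Fin n, ((e p : ℝ) : ℂ) * F p.succ) := by
  rw [Finset.mul_sum, Finset.mul_sum, ← Finset.sum_add_distrib, ← Finset.sum_add_distrib]
  refine Finset.sum_congr rfl fun p _ => ?_
  simp only [Pi.add_apply, Pi.smul_apply, smul_eq_mul]
  push_cast
  ring

lemma ld_sum_expand_r (n : ℕ) (ξ : Fin (n + 1) → ℝ) (ω : Fin n → ℝ) :
    (∑ i, ξ i * ld n 1 ω i) = ξ 0 + dotn (fun p => ξ p.succ) ω := by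
  rw [Fin.sum_univ_succ]
  simp [ld, dotn]

lemma ld_sum_expand_c (n : ℕ) (F : Fin (n + 1) → ℂ) (ω : Fin n → ℝ) :
    (∑ j, ((ld n 1 ω j : ℝ) : ℂ) * F j) = F 0 + ∑ p : Fin n, ((ω p : ℝ) : ℂ) * F p.succ := by
  rw [Fin.sum_univ_succ]
  simp [ld]

lemma sum_sq_eq_dotn {n : ℕ} (a : Fin n → ℝ) : (∑ p, a p ^ 2) = dotn a a := by
  unfold dotn
  exact Finset.sum_congr rfl fun p _ => sq (a p) ▸ (pow_two (a p))

lemma curveVanish (n : ℕ) (ω₀ : Fin n → ℝ) (δ : ℝ) (F : Fin (n + 1) → ℂ)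
    (ξ : Fin (n + 1) → ℝ)
    (hvan : ∀ ω' : Fin n → ℝ, inBall n ω₀ δ ω' → (∑ i, ξ i * ld n 1 ω' i = 0) →
      ∑ j, ((ld n 1 ω' j : ℝ) : ℂ) * F j = 0)
    (c u e : Fin n → ℝ) (r : ℝ) (hr : 0 < r)
    (hcc : dotn c c = 1 - r ^ 2) (huu : dotn u u = 1) (hee : dotn e e = 1)
    (hcu : dotn c u = 0) (hce : dotn c e = 0) (hue : dotn u e = 0)
    (hξc : ξ 0 + dotn (fun p => ξ p.succ) c = 0)
    (hξu : dotn (fun p => ξ p.succ) u = 0) (hξe : dotn (fun p => ξ p.succ) e = 0)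
    (hball : inBall n ω₀ δ (c + r • u)) :
    (∑ p : Fin n, ((u p : ℝ) : ℂ) * F p.succ = 0) ∧
      (∑ p : Fin n, ((e p : ℝ) : ℂ) * F p.succ = 0) := by
  classical
  set C : ℂ := ∑ p : Fin n, ((c p : ℝ) : ℂ) * F p.succ with hC
  set U : ℂ := ∑ p : Fin n, ((u p : ℝ) : ℂ) * F p.succ with hU
  set E : ℂ := ∑ p : Fin n, ((e p : ℝ) : ℂ) * F p.succ with hE
  set ω' : ℝ → Fin n → ℝ :=
    fun t => c + (r * Real.sqrt (1 - t ^ 2)) • u + (r * t) • e with hω'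
  have hω'0 : ω' 0 = c + r • u := by
    rw [hω']
    simp
  -- main instance
  have inst : ∀ t : ℝ, |t| ≤ 1 → (∑ p, (ω' t p - ω₀ p) ^ 2 < δ ^ 2) →
      F 0 + (C + ((r * Real.sqrt (1 - t ^ 2) : ℝ) : ℂ) * U + ((r * t : ℝ) : ℂ) * E) = 0 := by
    intro t ht hb
    have h1 : (0 : ℝ) ≤ 1 - t ^ 2 := by
      have := (sq_le_one_iff_abs_le_one (a := t)).mpr ht
      linarith
    have hs : Real.sqrt (1 - t ^ 2) ^ 2 = 1 - t ^ 2 := Real.sq_sqrt h1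
    have hsph : onSphere n (ω' t) := by
      unfold onSphere
      rw [sum_sq_eq_dotn, hω']
      simp only []
      rw [dotn_expand]
      rw [hcc, huu, hee, hcu, hce, hue]
      have : (r * Real.sqrt (1 - t ^ 2)) ^ 2 = r ^ 2 * (1 - t ^ 2) := by
        rw [mul_pow, hs]
      rw [this]
      ring
    have hperp : ∑ i, ξ i * ld n 1 (ω' t) i = 0 := by
      rw [ld_sum_expand_r, hω']
      simp only []
      rw [dotn_linear, hξu, hξe]
      rw [show dotn (fun p => ξ p.succ) c = -ξ 0 by linarith]
      ring
    have h2 := hvan (ω' t) ⟨hsph, hb⟩ hperp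
    rw [ld_sum_expand_c] at h2
    rw [hω'] at h2
    rw [sum_cast_expand] at h2
    rw [← hC, ← hU, ← hE] at h2
    rw [← h2]
    try push_cast
    try ring
  -- ball membership eventually
  have hcont : Continuous fun t : ℝ => ∑ p, (ω' t p - ω₀ p) ^ 2 := by
    apply continuous_finset_sum
    intro p _
    apply Continuous.pow
    apply Continuous.sub _ continuous_const
    have : (fun t : ℝ => ω' t p)
        = fun t : ℝ => c p + r * Real.sqrt (1 - t ^ 2) * u p + r * t * e p := by
      funext t
      rw [hω']
      simp [Pi.add_apply]
    rw [this]
    apply Continuous.add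
    apply Continuous.add continuous_const
    · exact ((continuous_const.mul ((continuous_const.sub (continuous_pow 2)).sqrt)).mul
        continuous_const)
    · exact (continuous_const.mul continuous_id).mul continuous_const
  have hev : ∀ᶠ t in nhds (0 : ℝ), ∑ p, (ω' t p - ω₀ p) ^ 2 < δ ^ 2 := by
    have h0 : (∑ p, (ω' 0 p - ω₀ p) ^ 2) < δ ^ 2 := by
      rw [hω'0]
      exact hball.2
    exact hcont.continuousAt.eventually_lt continuousAt_const h0
  obtain ⟨ε, hε, hprop⟩ := Metric.eventually_nhds_iff.mp hev
  set t0 : ℝ := min (ε / 2) 2⁻¹ with ht0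
  have ht0pos : 0 < t0 := lt_min (by linarith) (by norm_num)
  have ht0lt1 : t0 < 1 := lt_of_le_of_lt (min_le_right _ _) (by norm_num)
  have ht0abs : |t0| ≤ 1 := by rw [abs_of_pos ht0pos]; linarith
  have ht0abs' : |(-t0)| ≤ 1 := by rw [abs_neg]; exact ht0abs
  have hd1 : dist t0 (0 : ℝ) < ε := by
    rw [Real.dist_eq, sub_zero, abs_of_pos ht0pos]
    exact lt_of_le_of_lt (min_le_left _ _) (by linarith)
  have hd2 : dist (-t0) (0 : ℝ) < ε := by
    rw [Real.dist_eq, sub_zero, abs_neg, abs_of_pos ht0pos]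
    exact lt_of_le_of_lt (min_le_left _ _) (by linarith)
  have hd0 : dist (0 : ℝ) (0 : ℝ) < ε := by simpa using hε
  have eq1 := inst t0 ht0abs (hprop hd1)
  have eq2 := inst (-t0) ht0abs' (hprop hd2)
  have eq3 := inst 0 (by norm_num) (hprop hd0)
  rw [show ((-t0) ^ 2 : ℝ) = t0 ^ 2 by ring] at eq2
  have hsq1 : Real.sqrt (1 - (0:ℝ) ^ 2) = 1 := by norm_num
  rw [hsq1] at eq3
  -- E = 0
  have hEzero : E = 0 := by
    have h3 : ((2 * (r * t0) : ℝ) : ℂ) * E = 0 := by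
      push_cast
      push_cast at eq1 eq2
      linear_combination eq1 - eq2
    have hne : ((2 * (r * t0) : ℝ) : ℂ) ≠ 0 := by
      rw [Complex.ofReal_ne_zero]
      positivity
    exact (mul_eq_zero.mp h3).resolve_left hne
  have hUzero : U = 0 := by
    have hslt : Real.sqrt (1 - t0 ^ 2) < 1 := by
      rw [Real.sqrt_lt' one_pos]
      nlinarith
    have h4 : ((r * Real.sqrt (1 - t0 ^ 2) - r * 1 : ℝ) : ℂ) * U = 0 := by
      rw [hEzero] at eq1 eq3
      push_cast
      push_cast at eq1 eq3
      linear_combination eq1 - eq3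
    have hne : ((r * Real.sqrt (1 - t0 ^ 2) - r * 1 : ℝ) : ℂ) ≠ 0 := by
      rw [Complex.ofReal_ne_zero]
      have : r * Real.sqrt (1 - t0 ^ 2) < r * 1 := by
        exact (mul_lt_mul_iff_right₀ hr).mpr hslt
      linarith
    exact (mul_eq_zero.mp h4).resolve_left hne
  exact ⟨hUzero, hEzero⟩

lemma dotn_comm {n : ℕ} (a b : Fin n → ℝ) : dotn a b = dotn b a :=
  Finset.sum_congr rfl fun p _ => mul_comm _ _

lemma dotn_smul_left {n : ℕ} (t : ℝ) (a b : Fin n → ℝ) : dotn (t • a) b = t * dotn a b := by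
  unfold dotn
  rw [Finset.mul_sum]
  exact Finset.sum_congr rfl fun p _ => by
    simp only [Pi.smul_apply, smul_eq_mul]; ring

lemma dotn_smul_right {n : ℕ} (t : ℝ) (a b : Fin n → ℝ) : dotn a (t • b) = t * dotn a b := by
  rw [dotn_comm, dotn_smul_left, dotn_comm]

lemma dotn_sub_right {n : ℕ} (a b c : Fin n → ℝ) : dotn a (b - c) = dotn a b - dotn a c := by
  unfold dotn
  rw [← Finset.sum_sub_distrib]
  exact Finset.sum_congr rfl fun p _ => by
    simp only [Pi.sub_apply]; ring

lemma dotn_sub_left {n : ℕ} (a b c : Fin n → ℝ) : dotn (a - b) c = dotn a c - dotn b c := by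
  rw [dotn_comm, dotn_sub_right, dotn_comm a c, dotn_comm b c]

lemma dotn_self_pos {n : ℕ} {v : Fin n → ℝ} (hv : v ≠ 0) : 0 < dotn v v := by
  have hex : ∃ p, v p ≠ 0 := by
    by_contra hcon
    push_neg at hcon
    exact hv (funext hcon)
  obtain ⟨p, hp⟩ := hex
  apply Finset.sum_pos'
  · intro i _
    exact mul_self_nonneg _
  · exact ⟨p, Finset.mem_univ p, mul_self_pos.mpr hp⟩

lemma parallelLemma (n : ℕ) (hn : 3 ≤ n) (ω₀ : Fin n → ℝ) (δ : ℝ) (F : Fin (n + 1) → ℂ)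
    (ξ : Fin (n + 1) → ℝ) (hlt : (ξ 0) ^ 2 < ∑ p : Fin n, (ξ p.succ) ^ 2)
    (ω : Fin n → ℝ) (hω : inBall n ω₀ δ ω) (hperp : ∑ i, ξ i * ld n 1 ω i = 0)
    (hvan : ∀ ω' : Fin n → ℝ, inBall n ω₀ δ ω' → (∑ i, ξ i * ld n 1 ω' i = 0) →
      ∑ j, ((ld n 1 ω' j : ℝ) : ℂ) * F j = 0) :
    ∃ lam : ℂ, ∀ j, F j = lam * ((ξ j : ℝ) : ℂ) := by
  classical
  set ξ' : Fin n → ℝ := fun p => ξ p.succ with hξ'def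
  have hNsum : (∑ p : Fin n, (ξ p.succ) ^ 2) = dotn ξ' ξ' := sum_sq_eq_dotn ξ'
  have hN : 0 < dotn ξ' ξ' := by nlinarith [sq_nonneg (ξ 0)]
  set N := dotn ξ' ξ' with hNdef
  have hperp0 : ξ 0 + dotn ξ' ω = 0 := by
    rw [ld_sum_expand_r] at hperp
    exact hperp
  have hξω : dotn ξ' ω = -ξ 0 := by linarith
  set c : Fin n → ℝ := (-(ξ 0) / N) • ξ' with hcdef
  have hr2pos : 0 < 1 - ξ 0 ^ 2 / N := by
    rw [sub_pos, div_lt_one hN]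
    nlinarith
  set r : ℝ := Real.sqrt (1 - ξ 0 ^ 2 / N) with hrdef
  have hr : 0 < r := Real.sqrt_pos.mpr hr2pos
  have hr2 : r ^ 2 = 1 - ξ 0 ^ 2 / N := Real.sq_sqrt (le_of_lt hr2pos)
  have hξc : dotn ξ' c = -ξ 0 := by
    rw [hcdef, dotn_smul_right]
    field_simp
    rw [hNdef]
  have hcc : dotn c c = 1 - r ^ 2 := by
    rw [hcdef, dotn_smul_left, dotn_smul_right, hr2]
    field_simp
    ring
  have hωω : dotn ω ω = 1 := by
    rw [← sum_sq_eq_dotn]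
    exact hω.1
  have hωc : dotn ω c = ξ 0 ^ 2 / N := by
    rw [hcdef, dotn_smul_right, dotn_comm ω ξ', hξω]
    field_simp
  set u : Fin n → ℝ := r⁻¹ • (ω - c) with hudef
  have hωmc : dotn (ω - c) (ω - c) = r ^ 2 := by
    rw [dotn_sub_right, dotn_sub_left, dotn_sub_left, hωω, hcc, dotn_comm c ω, hωc, hr2]
    ring
  have huu : dotn u u = 1 := by
    rw [hudef, dotn_smul_left, dotn_smul_right, hωmc, pow_two]
    field_simp
  have hξu : dotn ξ' u = 0 := by
    rw [hudef, dotn_smul_right, dotn_sub_right, hξω, hξc]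
    ring
  have hcu : dotn c u = 0 := by
    rw [hudef, dotn_smul_right, dotn_sub_right, dotn_comm c ω, hωc, hcc, hr2]
    ring
  have hξc0 : ξ 0 + dotn (fun p => ξ p.succ) c = 0 := by
    rw [show (fun p => ξ p.succ) = ξ' from rfl, hξc]
    ring
  have hcru : c + r • u = ω := by
    rw [hudef, smul_smul, mul_inv_cancel₀ (ne_of_gt hr), one_smul]
    abel
  have hballc : inBall n ω₀ δ (c + r • u) := by rw [hcru]; exact hω
  -- a unit vector orthogonal to ξ' and u
  obtain ⟨e1, he1e1, hξe1, hue1⟩ := exists_unit_perp n hn ξ' u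
  have hce1 : dotn c e1 = 0 := by
    rw [hcdef, dotn_smul_left, hξe1, mul_zero]
  have hUzero : ∑ p : Fin n, ((u p : ℝ) : ℂ) * F p.succ = 0 :=
    (curveVanish n ω₀ δ F ξ hvan c u e1 r hr hcc huu he1e1 hcu hce1 hue1 hξc0 hξu hξe1 hballc).1
  -- the central claim
  have claim : ∀ w : Fin (n + 1) → ℝ, (∑ i, w i * ξ i = 0) →
      (∑ i, ((w i : ℝ) : ℂ) * F i) = 0 := by
    intro w hw
    set v : Fin n → ℝ := (fun p => w p.succ) - (w 0) • ω with hvdef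
    rw [Fin.sum_univ_succ] at hw
    have hwss : dotn (fun p => w p.succ) ξ' = -(w 0 * ξ 0) := by
      have : dotn (fun p => w p.succ) ξ' = ∑ p : Fin n, w p.succ * ξ p.succ := rfl
      rw [this]
      linarith
    have hξv : dotn ξ' v = 0 := by
      rw [hvdef, dotn_sub_right, dotn_smul_right, dotn_comm ξ' (fun p => w p.succ), hwss, hξω]
      ring
    set α := dotn v u with hαdef
    set vE : Fin n → ℝ := v - α • u with hvEdef
    have hξvE : dotn ξ' vE = 0 := by
      rw [hvEdef, dotn_sub_right, dotn_smul_right, hξv, hξu]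
      ring
    have huvE : dotn u vE = 0 := by
      rw [hvEdef, dotn_sub_right, dotn_smul_right, huu, dotn_comm u v]
      ring
    have hEsum : ∑ p : Fin n, ((vE p : ℝ) : ℂ) * F p.succ = 0 := by
      by_cases hvE0 : vE = 0
      · rw [show ∑ p : Fin n, ((vE p : ℝ) : ℂ) * F p.succ
            = ∑ p : Fin n, ((0 : ℝ) : ℂ) * F p.succ from by rw [hvE0]; rfl]
        simp
      · set m := Real.sqrt (dotn vE vE) with hmdef
        have hdpos : 0 < dotn vE vE := dotn_self_pos hvE0
        have hmpos : 0 < m := Real.sqrt_pos.mpr hdpos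
        have hm2 : m ^ 2 = dotn vE vE := Real.sq_sqrt hdpos.le
        set e2 : Fin n → ℝ := m⁻¹ • vE with he2def
        have hee2 : dotn e2 e2 = 1 := by
          rw [he2def, dotn_smul_left, dotn_smul_right, ← hm2, pow_two]
          field_simp
        have hce2 : dotn c e2 = 0 := by
          rw [he2def, dotn_smul_right, hcdef, dotn_smul_left, hξvE]
          ring
        have hue2 : dotn u e2 = 0 := by
          rw [he2def, dotn_smul_right, huvE]
          ring
        have hξe2 : dotn ξ' e2 = 0 := by
          rw [he2def, dotn_smul_right, hξvE]
          ring
        have hEe2 := (curveVanish n ω₀ δ F ξ hvan c u e2 r hr hcc huu hee2 hcu hce2 hue2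
          hξc0 hξu hξe2 hballc).2
        have hfac : ∑ p : Fin n, ((vE p : ℝ) : ℂ) * F p.succ
            = (m : ℂ) * ∑ p : Fin n, ((e2 p : ℝ) : ℂ) * F p.succ := by
          rw [Finset.mul_sum]
          refine Finset.sum_congr rfl fun p _ => ?_
          have hmne : (m : ℂ) ≠ 0 := Complex.ofReal_ne_zero.mpr (ne_of_gt hmpos)
          rw [he2def]
          simp only [Pi.smul_apply, smul_eq_mul]
          push_cast
          field_simp
          try ring
        rw [hfac, hEe2, mul_zero]
    -- assemble
    rw [Fin.sum_univ_succ]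
    have hω_eq := hvan ω hω hperp
    rw [ld_sum_expand_c] at hω_eq
    have hS : ∑ p : Fin n, ((ω p : ℝ) : ℂ) * F p.succ = -F 0 := by linear_combination hω_eq
    have hsplit : ∀ p : Fin n, w p.succ = α * u p + vE p + w 0 * ω p := by
      intro p
      have h1 : vE p = v p - α * u p := by
        rw [hvEdef]
        simp [Pi.sub_apply, Pi.smul_apply, smul_eq_mul]
      have h2 : v p = w p.succ - w 0 * ω p := by
        rw [hvdef]
        simp [Pi.sub_apply, Pi.smul_apply, smul_eq_mul]
      rw [h1, h2]
      ring
    have hmain : ∑ p : Fin n, ((w p.succ : ℝ) : ℂ) * F p.succ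
        = (α : ℂ) * (∑ p : Fin n, ((u p : ℝ) : ℂ) * F p.succ)
          + (∑ p : Fin n, ((vE p : ℝ) : ℂ) * F p.succ)
          + ((w 0 : ℝ) : ℂ) * (∑ p : Fin n, ((ω p : ℝ) : ℂ) * F p.succ) := by
      rw [Finset.mul_sum, Finset.mul_sum, ← Finset.sum_add_distrib, ← Finset.sum_add_distrib]
      refine Finset.sum_congr rfl fun p _ => ?_
      rw [hsplit p]
      push_cast
      ring
    rw [hmain, hUzero, hEsum, hS]
    ring
  -- conclude
  set M := ∑ i, ξ i * ξ i with hMdef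
  have hMN : M = ξ 0 * ξ 0 + N := by
    rw [hMdef, Fin.sum_univ_succ]
    rfl
  have hMpos : 0 < M := by nlinarith
  refine ⟨(∑ i, ((ξ i : ℝ) : ℂ) * F i) / (M : ℂ), fun j => ?_⟩
  set w : Fin (n + 1) → ℝ := fun i => M * (if i = j then 1 else 0) - ξ j * ξ i with hwdef
  have hwperp : ∑ i, w i * ξ i = 0 := by
    have h1 : ∀ i, w i * ξ i = M * (if i = j then ξ i else 0) - ξ j * (ξ i * ξ i) := by
      intro i
      by_cases h : i = j <;> simp [hwdef, h] <;> ring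
    rw [Finset.sum_congr rfl fun i _ => h1 i, Finset.sum_sub_distrib,
      ← Finset.mul_sum, ← Finset.mul_sum, Finset.sum_ite_eq' Finset.univ j ξ]
    simp only [Finset.mem_univ, if_true]
    rw [← hMdef]
    ring
  have hcl := claim w hwperp
  have hexp : ∑ i, ((w i : ℝ) : ℂ) * F i
      = (M : ℂ) * F j - ((ξ j : ℝ) : ℂ) * ∑ i, ((ξ i : ℝ) : ℂ) * F i := by
    have h2 : ∀ i, ((w i : ℝ) : ℂ) * F i
        = (M : ℂ) * (if i = j then F i else 0) - ((ξ j : ℝ) : ℂ) * (((ξ i : ℝ) : ℂ) * F i) := by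
      intro i
      by_cases h : i = j
      · simp [hwdef, h]
        push_cast
        ring
      · simp [hwdef, h]
        push_cast
        ring
    rw [Finset.sum_congr rfl fun i _ => h2 i, Finset.sum_sub_distrib,
      ← Finset.mul_sum, ← Finset.mul_sum, Finset.sum_ite_eq' Finset.univ j F]
    simp only [Finset.mem_univ, if_true]
  rw [hexp] at hcl
  have hMne : ((M : ℝ) : ℂ) ≠ 0 := Complex.ofReal_ne_zero.mpr (ne_of_gt hMpos)
  field_simp
  linear_combination hcl


lemma dotn_expand2 {n : ℕ} (x y : Fin n → ℝ) (s : ℝ) :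
    dotn (x + s • y) (x + s • y) = dotn x x + s ^ 2 * dotn y y + 2 * s * dotn x y := by
  unfold dotn
  have h : ∀ p : Fin n, (x + s • y) p * (x + s • y) p
      = x p * x p + s ^ 2 * (y p * y p) + 2 * s * (x p * y p) := by
    intro p
    simp only [Pi.add_apply, Pi.smul_apply, smul_eq_mul]
    ring
  rw [Finset.sum_congr rfl fun p _ => h p]
  simp only [Finset.sum_add_distrib, ← Finset.mul_sum]

lemma dotn_linear2 {n : ℕ} (w x y : Fin n → ℝ) (s : ℝ) :
    dotn w (x + s • y) = dotn w x + s * dotn w y := by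
  unfold dotn
  have h : ∀ p : Fin n, w p * (x + s • y) p = w p * x p + s * (w p * y p) := by
    intro p
    simp only [Pi.add_apply, Pi.smul_apply, smul_eq_mul]
    ring
  rw [Finset.sum_congr rfl fun p _ => h p]
  simp only [Finset.sum_add_distrib, ← Finset.mul_sum]

/-- If the zeroth and first momentum light ray transforms of a smooth
compactly supported vector field vanish for all base points and all `ω ∈ B_n(ω₀, δ)`,
then its Fourier transform vanishes on the open set `H_n`. -/
theorem vector_field_fourier_vanishes_on_Hn
    (n : ℕ) (hn : 3 ≤ n)
    (ω₀ : Fin n → ℝ) (hω₀ : onSphere n ω₀) (δ : ℝ) (hδ : 0 < δ)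
    (f : Fin (n + 1) → (Fin (n + 1) → ℝ) → ℂ)
    (hreg : ∀ j, ContDiff ℝ (⊤ : ℕ∞) (f j) ∧ HasCompactSupport (f j))
    (h : ∀ k ≤ 1, ∀ (x : Fin (n + 1) → ℝ) (ω : Fin n → ℝ), inBall n ω₀ δ ω →
      lrtVec n k f x ω = 0) :
    ∀ ζ : Fin (n + 1) → ℝ, memHn n ω₀ δ ζ → ∀ j, ftrans n (f j) ζ = 0 := by
  classical
  intro ζ hζ
  obtain ⟨hlt, ω, hω, hζω⟩ := hζ
  have hregc : ∀ j, Continuous (f j) ∧ HasCompactSupport (f j) :=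
    fun j => ⟨(hreg j).1.continuous, (hreg j).2⟩
  -- slice identities
  have hsl : ∀ k, k ≤ 1 → ∀ ω' : Fin n → ℝ, inBall n ω₀ δ ω' →
      ∀ ξ : Fin (n + 1) → ℝ, (∑ i, ξ i * ld n 1 ω' i = 0) →
      ∑ j, ((ld n 1 ω' j : ℝ) : ℂ) * (∫ y : Fin (n + 1) → ℝ, (y 0 : ℂ) ^ k * f j y *
        Complex.exp (-Complex.I * ((∑ i, y i * ξ i : ℝ) : ℂ))) = 0 := by
    intro k hk ω' hb ξ hp
    exact sliceId n k f hregc ω' (fun x => h k hk x ω' hb) ξ hp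
  have hft : ∀ (j : Fin (n + 1)) (ξ : Fin (n + 1) → ℝ), ftrans n (f j) ξ
      = ∫ y : Fin (n + 1) → ℝ, (y 0 : ℂ) ^ (0 : ℕ) * f j y *
          Complex.exp (-Complex.I * ((∑ i, y i * ξ i : ℝ) : ℂ)) := by
    intro j ξ
    unfold ftrans
    congr 1
    funext y
    rw [pow_zero, one_mul]
  have hvan : ∀ ξ : Fin (n + 1) → ℝ, ∀ ω' : Fin n → ℝ, inBall n ω₀ δ ω' →
      (∑ i, ξ i * ld n 1 ω' i = 0) →
      ∑ j, ((ld n 1 ω' j : ℝ) : ℂ) * ftrans n (f j) ξ = 0 := by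
    intro ξ ω' hb hp
    have h0 := hsl 0 (by norm_num) ω' hb ξ hp
    rw [← h0]
    exact Finset.sum_congr rfl fun j _ => by rw [hft j ξ]
  have hpar : ∀ ξ : Fin (n + 1) → ℝ, (ξ 0) ^ 2 < (∑ p : Fin n, (ξ p.succ) ^ 2) →
      ∀ ω' : Fin n → ℝ, inBall n ω₀ δ ω' → (∑ i, ξ i * ld n 1 ω' i = 0) →
      ∃ lam : ℂ, ∀ j, ftrans n (f j) ξ = lam * ((ξ j : ℝ) : ℂ) := by
    intro ξ h1 ω' h2 h3
    exact parallelLemma n hn ω₀ δ (fun j => ftrans n (f j) ξ) ξ h1 ω' h2 h3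
      (fun w hw hp => hvan ξ w hw hp)
  -- geometry setup
  set ξ' : Fin n → ℝ := fun p => ζ p.succ with hξ'def
  have hNsum : (∑ p : Fin n, (ζ p.succ) ^ 2) = dotn ξ' ξ' := sum_sq_eq_dotn ξ'
  set N := dotn ξ' ξ' with hNdef
  have hζN : ζ 0 ^ 2 < N := by rw [← hNsum]; exact hlt
  have hN : 0 < N := by nlinarith [sq_nonneg (ζ 0)]
  have hperp0 : ζ 0 + dotn ξ' ω = 0 := by rw [ld_sum_expand_r] at hζω; exact hζω
  set c : Fin n → ℝ := (-(ζ 0) / N) • ξ' with hcdef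
  have hξc : dotn ξ' c = -ζ 0 := by rw [hcdef, dotn_smul_right]; field_simp; rw [hNdef]
  have hξωc : dotn ξ' (ω - c) = 0 := by rw [dotn_sub_right, hξc]; linarith
  set r : ℝ := Real.sqrt (1 - ζ 0 ^ 2 / N) with hrdef
  have hr2pos : 0 < 1 - ζ 0 ^ 2 / N := by rw [sub_pos, div_lt_one hN]; exact hζN
  have hr : 0 < r := Real.sqrt_pos.mpr hr2pos
  have hr2 : r ^ 2 = 1 - ζ 0 ^ 2 / N := Real.sq_sqrt hr2pos.le
  have hωω : dotn ω ω = 1 := by rw [← sum_sq_eq_dotn]; exact hω.1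
  have hcc : dotn c c = ζ 0 ^ 2 / N := by
    rw [hcdef, dotn_smul_left, dotn_smul_right]
    field_simp
    ring
  have hωc : dotn ω c = ζ 0 ^ 2 / N := by
    rw [hcdef, dotn_smul_right, dotn_comm ω ξ', show dotn ξ' ω = -ζ 0 by linarith]
    field_simp
  have hωmc : dotn (ω - c) (ω - c) = r ^ 2 := by
    rw [dotn_sub_right, dotn_sub_left, dotn_sub_left, hωω, hcc, dotn_comm c ω, hωc, hr2]
    ring
  -- the path and the moving witness
  set ζτ : ℝ → Fin (n + 1) → ℝ := fun τ i => ζ i + τ * (if i = 0 then 1 else 0) with hζτdef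
  have hζτ0 : ζτ 0 = ζ := by funext i; rw [hζτdef]; simp
  have hζτsucc : ∀ (τ : ℝ) (p : Fin n), ζτ τ p.succ = ζ p.succ := by
    intro τ p; rw [hζτdef]; simp [Fin.succ_ne_zero]
  have hζτzero : ∀ τ : ℝ, ζτ τ 0 = ζ 0 + τ := by intro τ; rw [hζτdef]; simp
  set W : ℝ → Fin n → ℝ := fun τ => (-(ζ 0 + τ) / N) • ξ'
      + (Real.sqrt (1 - (ζ 0 + τ) ^ 2 / N) * r⁻¹) • (ω - c) with hWdef
  have hW0 : W 0 = ω := by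
    rw [hWdef]
    simp only [add_zero]
    rw [← hrdef, mul_inv_cancel₀ (ne_of_gt hr), one_smul, ← hcdef]
    abel
  have hsph_perp : ∀ τ : ℝ, (ζ 0 + τ) ^ 2 < N →
      onSphere n (W τ) ∧ (∑ i, ζτ τ i * ld n 1 (W τ) i = 0) := by
    intro τ hτ
    have hle : (0:ℝ) ≤ 1 - (ζ 0 + τ) ^ 2 / N := by
      rw [sub_nonneg, div_le_one hN]; exact hτ.le
    have hrτ2 : Real.sqrt (1 - (ζ 0 + τ) ^ 2 / N) ^ 2 = 1 - (ζ 0 + τ) ^ 2 / N :=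
      Real.sq_sqrt hle
    constructor
    · unfold onSphere
      rw [sum_sq_eq_dotn, hWdef]
      simp only []
      rw [dotn_expand2, dotn_smul_left, dotn_smul_right, ← hNdef, hωmc,
        dotn_smul_left, hξωc, mul_pow, hrτ2]
      field_simp
      ring
    · rw [ld_sum_expand_r]
      have hfs : (fun p => ζτ τ p.succ) = ξ' := funext fun p => hζτsucc τ p
      rw [hfs, hζτzero, hWdef]
      simp only []
      rw [dotn_linear2, dotn_smul_right, ← hNdef, hξωc]
      field_simp
      ring
  -- eventual conditions
  have hballev : ∀ᶠ τ in nhds (0 : ℝ), ∑ p, (W τ p - ω₀ p) ^ 2 < δ ^ 2 := by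
    have hcont : Continuous fun τ : ℝ => ∑ p, (W τ p - ω₀ p) ^ 2 := by
      apply continuous_finset_sum
      intro p _
      apply Continuous.pow
      apply Continuous.sub _ continuous_const
      have hWp : (fun τ : ℝ => W τ p) = fun τ : ℝ => (-(ζ 0 + τ) / N) * ξ' p
          + (Real.sqrt (1 - (ζ 0 + τ) ^ 2 / N) * r⁻¹) * (ω p - c p) := by
        funext τ
        rw [hWdef]
        simp [Pi.add_apply, Pi.smul_apply, Pi.sub_apply, smul_eq_mul]
      rw [hWp]
      refine Continuous.add ?_ ?_
      · exact ((continuous_const.add continuous_id).neg.div_const N).mul continuous_const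
      · exact ((Continuous.sqrt (continuous_const.sub
          (((continuous_const.add continuous_id).pow 2).div_const N))).mul
            continuous_const).mul continuous_const
    have h0 : (∑ p, (W 0 p - ω₀ p) ^ 2) < δ ^ 2 := by rw [hW0]; exact hω.2
    exact hcont.continuousAt.eventually_lt continuousAt_const h0
  have hNev : ∀ᶠ τ in nhds (0 : ℝ), (ζ 0 + τ) ^ 2 < N := by
    have hcont : Continuous fun τ : ℝ => (ζ 0 + τ) ^ 2 :=
      (continuous_const.add continuous_id).pow 2
    have h0 : ((ζ 0 + (0 : ℝ)) ^ 2) < N := by simpa using hζN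
    exact hcont.continuousAt.eventually_lt continuousAt_const h0
  -- the derivative of the slice pairing
  have hder : ∀ j : Fin (n + 1), HasDerivAt (fun τ : ℝ => ftrans n (f j) (ζτ τ))
      (∫ y : Fin (n + 1) → ℝ, (-Complex.I * (y 0 : ℂ)) *
        (f j y * Complex.exp (-Complex.I * ((∑ i, y i * ζ i : ℝ) : ℂ)))) 0 := by
    intro j
    have hd := deriv_fhat n (f j) (hregc j).1 (hregc j).2 ζ
    have heq : (fun τ : ℝ => ∫ y : Fin (n + 1) → ℝ,
        f j y * Complex.exp (-Complex.I *
          ((∑ i, y i * (ζ i + τ * (if i = 0 then 1 else 0)) : ℝ) : ℂ)))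
        = fun τ : ℝ => ftrans n (f j) (ζτ τ) := by
      funext τ
      rw [hζτdef]
      rfl
    rw [heq] at hd
    exact hd
  set uu : ℝ → ℂ := fun τ => ∑ j, ((ld n 1 ω j : ℝ) : ℂ) * ftrans n (f j) (ζτ τ) with huudef
  have huu0 : uu 0 = 0 := by
    rw [huudef]
    simp only [hζτ0]
    exact hvan ζ ω hω hζω
  have hDval : ∑ j, ((ld n 1 ω j : ℝ) : ℂ) * (∫ y : Fin (n + 1) → ℝ,
      (-Complex.I * (y 0 : ℂ)) *
        (f j y * Complex.exp (-Complex.I * ((∑ i, y i * ζ i : ℝ) : ℂ)))) = 0 := by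
    have h1 := hsl 1 le_rfl ω hω ζ hζω
    have h2 : ∀ j : Fin (n + 1), (∫ y : Fin (n + 1) → ℝ, (-Complex.I * (y 0 : ℂ)) *
        (f j y * Complex.exp (-Complex.I * ((∑ i, y i * ζ i : ℝ) : ℂ))))
        = -Complex.I * ∫ y : Fin (n + 1) → ℝ, (y 0 : ℂ) ^ (1 : ℕ) * f j y *
            Complex.exp (-Complex.I * ((∑ i, y i * ζ i : ℝ) : ℂ)) := by
      intro j
      rw [← integral_const_mul]
      congr 1
      funext y
      ring
    rw [Finset.sum_congr rfl fun j _ => by rw [h2 j]]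
    rw [show ∑ j, ((ld n 1 ω j : ℝ) : ℂ) * (-Complex.I * ∫ y : Fin (n + 1) → ℝ,
        (y 0 : ℂ) ^ (1 : ℕ) * f j y * Complex.exp (-Complex.I * ((∑ i, y i * ζ i : ℝ) : ℂ)))
        = -Complex.I * ∑ j, ((ld n 1 ω j : ℝ) : ℂ) * ∫ y : Fin (n + 1) → ℝ,
          (y 0 : ℂ) ^ (1 : ℕ) * f j y * Complex.exp (-Complex.I * ((∑ i, y i * ζ i : ℝ) : ℂ))
      from by rw [Finset.mul_sum]; exact Finset.sum_congr rfl fun j _ => by ring]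
    rw [h1, mul_zero]
  have huuder : HasDerivAt uu 0 0 := by
    have h3 : HasDerivAt (fun τ : ℝ => ∑ j, ((ld n 1 ω j : ℝ) : ℂ) * ftrans n (f j) (ζτ τ))
        (∑ j, ((ld n 1 ω j : ℝ) : ℂ) * (∫ y : Fin (n + 1) → ℝ, (-Complex.I * (y 0 : ℂ)) *
          (f j y * Complex.exp (-Complex.I * ((∑ i, y i * ζ i : ℝ) : ℂ))))) 0 :=
      HasDerivAt.fun_sum fun j _ => (hder j).const_mul _
    rw [hDval] at h3
    exact h3
  -- a nonzero spatial coordinate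
  obtain ⟨p0, hp0⟩ : ∃ p : Fin n, ζ p.succ ≠ 0 := by
    by_contra hcon
    push_neg at hcon
    have hz : (∑ p : Fin n, (ζ p.succ) ^ 2) = 0 :=
      Finset.sum_eq_zero fun p _ => by rw [hcon p]; ring
    nlinarith [sq_nonneg (ζ 0)]
  -- slope limit
  have hslope : Filter.Tendsto (fun τ : ℝ => uu τ / (τ : ℂ))
      (nhdsWithin (0 : ℝ) {(0 : ℝ)}ᶜ) (nhds 0) := by
    have h1 := hasDerivAt_iff_tendsto_slope.mp huuder
    apply h1.congr
    intro τ
    show (τ - 0)⁻¹ • (uu τ - uu 0) = uu τ / (τ : ℂ)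
    rw [huu0, sub_zero, sub_zero, Complex.real_smul, Complex.ofReal_inv]
    rw [div_eq_inv_mul]
  have hcontf : Filter.Tendsto (fun τ : ℝ => ftrans n (f p0.succ) (ζτ τ))
      (nhdsWithin (0 : ℝ) {(0 : ℝ)}ᶜ) (nhds (ftrans n (f p0.succ) ζ)) := by
    have hct := (hder p0.succ).continuousAt.tendsto
    rw [show ftrans n (f p0.succ) (ζτ 0) = ftrans n (f p0.succ) ζ from by rw [hζτ0]] at hct
    exact hct.mono_left nhdsWithin_le_nhds
  -- eventual equality
  have hevEq : ∀ᶠ τ in nhdsWithin (0 : ℝ) {(0 : ℝ)}ᶜ,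
      ftrans n (f p0.succ) (ζτ τ) = (uu τ / (τ : ℂ)) * ((ζ p0.succ : ℝ) : ℂ) := by
    have hand := (hNev.and hballev).filter_mono (nhdsWithin_le_nhds (s := {(0:ℝ)}ᶜ))
    filter_upwards [hand, self_mem_nhdsWithin] with τ hτ hτne
    obtain ⟨hτN, hτball⟩ := hτ
    have hτne' : τ ≠ 0 := hτne
    have hsp := hsph_perp τ hτN
    have hball : inBall n ω₀ δ (W τ) := ⟨hsp.1, hτball⟩
    have hlt' : (ζτ τ 0) ^ 2 < ∑ p : Fin n, (ζτ τ p.succ) ^ 2 := by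
      rw [hζτzero, show (∑ p : Fin n, (ζτ τ p.succ) ^ 2) = ∑ p : Fin n, (ζ p.succ) ^ 2 from
        Finset.sum_congr rfl fun p _ => by rw [hζτsucc], hNsum]
      exact hτN
    obtain ⟨lam, hlam⟩ := hpar (ζτ τ) hlt' (W τ) hball hsp.2
    have hre : ∑ j, ld n 1 ω j * ζτ τ j = τ := by
      have e1 : ∀ j : Fin (n + 1), ld n 1 ω j * ζτ τ j
          = ζ j * ld n 1 ω j + (if j = (0 : Fin (n + 1)) then τ * ld n 1 ω j else 0) := by
        intro j
        by_cases hj : j = 0 <;> rw [hζτdef] <;> simp [hj] <;> ring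
      rw [Finset.sum_congr rfl fun j _ => e1 j, Finset.sum_add_distrib, hζω,
        Finset.sum_ite_eq' Finset.univ (0 : Fin (n + 1))]
      simp [ld]
    have hldsum : ∑ j, ((ld n 1 ω j : ℝ) : ℂ) * ((ζτ τ j : ℝ) : ℂ) = (τ : ℂ) := by
      rw [show ∑ j, ((ld n 1 ω j : ℝ) : ℂ) * ((ζτ τ j : ℝ) : ℂ)
          = ((∑ j, ld n 1 ω j * ζτ τ j : ℝ) : ℂ) from by push_cast; rfl, hre]
    have huuτ : uu τ = lam * (τ : ℂ) := by
      rw [huudef]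
      simp only []
      rw [Finset.sum_congr rfl fun j _ => by rw [hlam j]]
      rw [show ∑ j, ((ld n 1 ω j : ℝ) : ℂ) * (lam * ((ζτ τ j : ℝ) : ℂ))
          = lam * ∑ j, ((ld n 1 ω j : ℝ) : ℂ) * ((ζτ τ j : ℝ) : ℂ) from by
        rw [Finset.mul_sum]; exact Finset.sum_congr rfl fun j _ => by ring, hldsum]
    have hτC : (τ : ℂ) ≠ 0 := Complex.ofReal_ne_zero.mpr hτne'
    rw [hlam p0.succ, hζτsucc τ p0, huuτ]
    field_simp
  have hfinal : ftrans n (f p0.succ) ζ = 0 * ((ζ p0.succ : ℝ) : ℂ) :=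
    tendsto_nhds_unique_of_eventuallyEq hcontf (hslope.mul_const _) hevEq
  have hF0 : ftrans n (f p0.succ) ζ = 0 := by rw [hfinal, zero_mul]
  obtain ⟨lam, hlam⟩ := hpar ζ hlt ω hω hζω
  have hlamz : lam = 0 := by
    have hx := hlam p0.succ
    rw [hF0] at hx
    have hne : ((ζ p0.succ : ℝ) : ℂ) ≠ 0 := Complex.ofReal_ne_zero.mpr hp0
    exact (mul_eq_zero.mp hx.symm).resolve_right hne
  intro j
  rw [hlam j, hlamz, zero_mul]
end
end

section
/- Let n ≥ 2 and c > 0, fix ω_0 ∈ S^{n−1} and δ > 0, and let f ∈ C_c^∞(ℝ^{1+n}; ℂ). If L̃^{0,0} f((t,x), ω) = 0 for all (t,x) ∈ ℝ^{1+n} and all ω ∈ B_n(ω_0, δ), then f = 0. -/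
open MeasureTheory Finset

noncomputable section

/-- The light ray transform of a scalar function:
`L̃^{0,0} f((t,x), ω) = ∫_ℝ f((t,x) + s (c,ω)) ds`. -/
def lrt0 (n : ℕ) (c : ℝ) (f : (Fin (n + 1) → ℝ) → ℂ)
    (x : Fin (n + 1) → ℝ) (ω : Fin n → ℝ) : ℂ :=
  ∫ s : ℝ, f (x + s • ld n c ω)

def myF (n : ℕ) (f : (Fin (n + 1) → ℝ) → ℂ) (ξ : Fin (n + 1) → ℝ) : ℂ :=
  ∫ y : Fin (n + 1) → ℝ,
    Complex.exp (((-2 * Real.pi * (∑ i, y i * ξ i) : ℝ) : ℂ) * Complex.I) * f y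

lemma sphere_abs_le_one (n : ℕ) (w : Fin n → ℝ) (hw : onSphere n w) : ∀ i, |w i| ≤ 1 := by
  intro i
  have hw' : ∑ j, w j ^ 2 = 1 := hw
  rw [abs_le]
  constructor <;> nlinarith [Finset.single_le_sum (f := fun j => w j ^ 2)
    (fun j _ => sq_nonneg (w j)) (Finset.mem_univ i), hw']

lemma cons_add_smul (n : ℕ) (c : ℝ) (ω : Fin n → ℝ) (s : ℝ) (u : Fin n → ℝ) :
    (Fin.cons (c * s) (u + s • ω) : Fin (n+1) → ℝ) = Fin.cons (0:ℝ) u + s • ld n c ω := by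
  funext i
  refine Fin.cases ?_ ?_ i
  · simp [ld, mul_comm]
  · intro j; simp [ld]

lemma slice_vanish (n : ℕ) (c : ℝ) (hc : 0 < c)
    (f : (Fin (n + 1) → ℝ) → ℂ) (hf : Continuous f) (hsupp : HasCompactSupport f)
    (ω : Fin n → ℝ) (hω1 : ∀ i, |ω i| ≤ 1)
    (h0 : ∀ x, lrt0 n c f x ω = 0)
    (ξ : Fin (n + 1) → ℝ) (hξ : ∑ i, ld n c ω i * ξ i = 0) :
    myF n f ξ = 0 := by
  classical
  set G : (Fin (n+1) → ℝ) → ℂ := fun y =>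
    Complex.exp (((-2 * Real.pi * (∑ i, y i * ξ i) : ℝ) : ℂ) * Complex.I) * f y with hG
  have hGcont : Continuous G := by
    apply Continuous.mul ?_ hf
    apply Complex.continuous_exp.comp
    apply Continuous.mul ?_ continuous_const
    exact Complex.continuous_ofReal.comp (by fun_prop)
  have hGsupp : HasCompactSupport G := by
    apply HasCompactSupport.intro hsupp
    intro y hy
    simp [hG, image_eq_zero_of_notMem_tsupport hy]
  have hGint : Integrable G := hGcont.integrable_of_hasCompactSupport hGsupp
  -- bound on the support of f
  obtain ⟨R, hR⟩ : ∃ R : ℝ, ∀ y ∈ tsupport f, ‖y‖ ≤ R := by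
    obtain ⟨R, hR⟩ := hsupp.isCompact.isBounded.subset_closedBall 0
    exact ⟨R, fun y hy => by simpa using hR hy⟩
  -- the shifted function on the product space
  set A : ℝ × (Fin n → ℝ) → (Fin (n+1) → ℝ) := fun p =>
    Fin.cons (0:ℝ) p.2 + p.1 • ld n c ω with hA
  have hAcont : Continuous A := by
    apply Continuous.add
    · refine continuous_pi fun i => Fin.cases ?_ (fun j => ?_) i
      · exact continuous_const
      · exact (continuous_apply j).comp (continuous_snd :
          Continuous fun p : ℝ × (Fin n → ℝ) => p.2)
    · exact continuous_fst.smul continuous_const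
  have hGA_supp : HasCompactSupport (fun p => G (A p)) := by
    apply HasCompactSupport.intro (K := (Set.Icc (-(R/c)) (R/c)) ×ˢ
      (Set.Icc (fun _ => -(R + R/c)) (fun _ => R + R/c)))
      (isCompact_Icc.prod isCompact_Icc)
    rintro ⟨s, u⟩ hp
    have : f (A (s, u)) = 0 := by
      by_contra hne
      have hmem : A (s, u) ∈ tsupport f := subset_tsupport f hne
      have hnorm := hR _ hmem
      have hcoord : ∀ i, |A (s, u) i| ≤ R := fun i =>
        le_trans (norm_le_pi_norm (A (s,u)) i) hnorm
      have h0' : |c * s| ≤ R := by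
        have := hcoord 0
        simpa [hA, ld, mul_comm] using this
      have hs : |s| ≤ R / c := by
        rw [abs_mul, abs_of_pos hc] at h0'
        rw [le_div_iff₀ hc]
        linarith [h0']
      have hu : ∀ j, |u j| ≤ R + R / c := by
        intro j
        have h1 := hcoord j.succ
        have h2 : A (s, u) j.succ = u j + s * ω j := by simp [hA, ld]
        rw [h2] at h1
        have h3 : |s * ω j| ≤ R / c := by
          rw [abs_mul]
          calc |s| * |ω j| ≤ (R/c) * 1 := by
                apply mul_le_mul hs (hω1 j) (abs_nonneg _) (div_nonneg ?_ hc.le)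
                linarith [abs_nonneg (c*s), h0']
            _ = R / c := by ring
        have h4 := abs_add_le (u j + s * ω j) (-(s * ω j))
        simp only [add_neg_cancel_right, abs_neg] at h4
        linarith [h4, h1, h3]
      apply hp
      refine ⟨Set.mem_Icc.mpr (abs_le.mp hs), Set.mem_Icc.mpr ⟨?_, ?_⟩⟩
      · intro j; exact (abs_le.mp (hu j)).1
      · intro j; exact (abs_le.mp (hu j)).2
    simp [hG, this]
  have hGA_cont : Continuous fun p => G (A p) := hGcont.comp hAcont
  have hGA_int : Integrable (fun p : ℝ × (Fin n → ℝ) => G (A p)) :=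
    hGA_cont.integrable_of_hasCompactSupport hGA_supp
  -- reduce to iterated integral
  have mp := measurePreserving_piFinSuccAbove (fun _ : Fin (n+1) => (volume : Measure ℝ)) 0
  set e := MeasurableEquiv.piFinSuccAbove (fun _ : Fin (n+1) => ℝ) 0 with he
  have hsymm : ∀ p : ℝ × (Fin n → ℝ), e.symm p = Fin.cons p.1 p.2 := by
    intro p
    simp [he, MeasurableEquiv.piFinSuccAbove_symm_apply, Fin.insertNthEquiv,
      Fin.insertNth_zero]
  have mp2 : MeasurePreserving e.symm
      ((volume : Measure ℝ).prod (volume : Measure (Fin n → ℝ)))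
      (volume : Measure (Fin (n+1) → ℝ)) := by
    simpa [← volume_pi] using MeasurePreserving.symm e mp
  have step1 : ∫ y, G y = ∫ t : ℝ, ∫ u : Fin n → ℝ, G (Fin.cons t u) := by
    have h1 : ∫ p : ℝ × (Fin n → ℝ), G (e.symm p)
        ∂((volume : Measure ℝ).prod (volume : Measure (Fin n → ℝ)))
        = ∫ y, G y ∂(volume : Measure (Fin (n+1) → ℝ)) :=
      mp2.integral_comp' (f := e.symm) G
    have h2 : Integrable (fun p : ℝ × (Fin n → ℝ) => G (e.symm p))
        ((volume : Measure ℝ).prod (volume : Measure (Fin n → ℝ))) :=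
      (mp2.integrable_comp_emb (MeasurableEquiv.measurableEmbedding e.symm)
        (g := G)).mpr hGint
    rw [← h1, MeasureTheory.integral_prod _ h2]
    simp_rw [hsymm]
  have hc' : |c⁻¹| ≠ 0 := by
    simp [abs_eq_zero, hc.ne']
  set φ : ℝ → ℂ := fun t => ∫ u : Fin n → ℝ, G (Fin.cons t u) with hφ
  have step2 : ∫ s : ℝ, φ (c * s) = |c⁻¹| • ∫ t, φ t :=
    MeasureTheory.Measure.integral_comp_mul_left φ c
  have key : ∫ s : ℝ, φ (c * s) = 0 := by
    have step3 : ∀ s : ℝ, φ (c * s) = ∫ u : Fin n → ℝ, G (A (s, u)) := by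
      intro s
      simp only [hφ]
      rw [← MeasureTheory.integral_add_right_eq_self (fun u => G (Fin.cons (c*s) u)) (s • ω)]
      congr 1
      funext u
      rw [cons_add_smul]
    simp_rw [step3]
    have swap := MeasureTheory.integral_integral_swap_of_hasCompactSupport
      (f := fun s u => G (A (s, u))) (μ := (volume : Measure ℝ))
      (ν := (volume : Measure (Fin n → ℝ))) hGA_cont hGA_supp
    rw [swap]
    have inner0 : ∀ u : Fin n → ℝ, (∫ s : ℝ, G (A (s, u))) = 0 := by
      intro u
      have hdot : ∀ s : ℝ, (∑ i, A (s, u) i * ξ i)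
          = ∑ i, (Fin.cons (0:ℝ) u : Fin (n+1) → ℝ) i * ξ i := by
        intro s
        have : ∀ i, A (s, u) i * ξ i
            = (Fin.cons (0:ℝ) u : Fin (n+1) → ℝ) i * ξ i + s * (ld n c ω i * ξ i) := by
          intro i; simp [hA]; ring
        rw [Finset.sum_congr rfl fun i _ => this i, Finset.sum_add_distrib,
          ← Finset.mul_sum, hξ, mul_zero, add_zero]
      have : ∀ s : ℝ, G (A (s, u))
          = Complex.exp (((-2 * Real.pi *
              (∑ i, (Fin.cons (0:ℝ) u : Fin (n+1) → ℝ) i * ξ i) : ℝ) : ℂ) * Complex.I)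
            * f ((Fin.cons (0:ℝ) u : Fin (n+1) → ℝ) + s • ld n c ω) := by
        intro s
        rw [hG]
        simp only [hA]
        rw [hdot s]
      simp_rw [this]
      rw [MeasureTheory.integral_const_mul]
      have := h0 (Fin.cons (0:ℝ) u)
      rw [lrt0] at this
      rw [this, mul_zero]
    simp_rw [inner0]
    simp
  have : ∫ t, φ t = 0 := by
    rcases smul_eq_zero.mp (step2.symm.trans key) with h | h
    · exact absurd h hc'
    · exact h
  rw [myF, step1, ← hφ] at *
  exact this

lemma exists_perp (n : ℕ) (hn : 2 ≤ n) (ω₀ : Fin n → ℝ) :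
    ∃ ν : Fin n → ℝ, (∑ i, ν i ^ 2 = 1) ∧ (∑ i, ν i * ω₀ i = 0) := by
  classical
  set i0 : Fin n := ⟨0, by omega⟩
  set i1 : Fin n := ⟨1, by omega⟩
  have hne : i0 ≠ i1 := by simp [i0, i1, Fin.ext_iff]
  by_cases h : ω₀ i0 = 0 ∧ ω₀ i1 = 0
  · refine ⟨Pi.single i0 1, ?_, ?_⟩
    · rw [Finset.sum_eq_single i0]
      · simp
      · intro b _ hb; simp [Pi.single_apply, hb]
      · simp
    · rw [Finset.sum_eq_single i0]
      · simp [h.1]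
      · intro b _ hb; simp [Pi.single_apply, hb]
      · simp
  · set v : Fin n → ℝ := Pi.single i0 (ω₀ i1) - Pi.single i1 (ω₀ i0) with hv
    have hv0 : v i0 = ω₀ i1 := by simp [hv, Pi.single_apply, hne, hne.symm]
    have hv1 : v i1 = -(ω₀ i0) := by simp [hv, Pi.single_apply, hne, hne.symm]
    have hvz : ∀ i, i ≠ i0 → i ≠ i1 → v i = 0 := by
      intro i h0 h1; simp [hv, Pi.single_apply, h0, h1]
    have sumv : ∀ (w : Fin n → ℝ), ∑ i, v i * w i = ω₀ i1 * w i0 - ω₀ i0 * w i1 := by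
      intro w
      rw [← Finset.sum_subset (Finset.subset_univ {i0, i1})
        (by intro i _ hi; simp only [Finset.mem_insert, Finset.mem_singleton, not_or] at hi
            rw [hvz i hi.1 hi.2, zero_mul])]
      rw [Finset.sum_pair hne, hv0, hv1]
      ring
    have sumsq : ∑ i, v i ^ 2 = ω₀ i1 ^ 2 + ω₀ i0 ^ 2 := by
      rw [← Finset.sum_subset (Finset.subset_univ {i0, i1})
        (by intro i _ hi; simp only [Finset.mem_insert, Finset.mem_singleton, not_or] at hi
            rw [hvz i hi.1 hi.2]; ring)]
      rw [Finset.sum_pair hne, hv0, hv1]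
      ring
    have hpos : 0 < ω₀ i1 ^ 2 + ω₀ i0 ^ 2 := by
      rcases not_and_or.mp h with h' | h'
      · have : 0 < ω₀ i0 ^ 2 := by positivity
        nlinarith [sq_nonneg (ω₀ i1)]
      · have : 0 < ω₀ i1 ^ 2 := by positivity
        nlinarith [sq_nonneg (ω₀ i0)]
    set r : ℝ := Real.sqrt (ω₀ i1 ^ 2 + ω₀ i0 ^ 2) with hr
    have hrpos : 0 < r := Real.sqrt_pos.mpr hpos
    refine ⟨r⁻¹ • v, ?_, ?_⟩
    · have : ∑ i, (r⁻¹ • v) i ^ 2 = r⁻¹ ^ 2 * ∑ i, v i ^ 2 := by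
        rw [Finset.mul_sum]; congr 1; funext i; simp [mul_pow]
      rw [this, sumsq, hr]
      rw [inv_pow, Real.sq_sqrt hpos.le]
      field_simp
    · have : ∑ i, (r⁻¹ • v) i * ω₀ i = r⁻¹ * ∑ i, v i * ω₀ i := by
        rw [Finset.mul_sum]; congr 1; funext i; simp; ring
      rw [this, sumv]
      ring

set_option maxHeartbeats 1000000 in
lemma interior_zero (n : ℕ) (hn : 2 ≤ n) (c : ℝ) (hc : 0 < c)
    (ω₀ : Fin n → ℝ) (hω₀ : onSphere n ω₀) (δ : ℝ) (hδ : 0 < δ) :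
    ∃ (η : Fin (n + 1) → ℝ) (ρ : ℝ), 0 < ρ ∧
      ∀ ξ : Fin (n + 1) → ℝ, (∀ i, |ξ i - η i| < ρ) →
        ∃ ω : Fin n → ℝ, inBall n ω₀ δ ω ∧ ∑ i, ld n c ω i * ξ i = 0 := by
  classical
  obtain ⟨ν, hν1, hν2⟩ := exists_perp n hn ω₀
  set η : Fin (n + 1) → ℝ := Fin.cons 0 ν with hη
  set θ₁ : ℝ := min (δ / 2) (1 / 2) with hθ₁
  have hθ₁pos : 0 < θ₁ := lt_min (by linarith) (by norm_num)
  have hθ₁le : θ₁ ≤ 1 / 2 := min_le_right _ _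
  have hθ₁δ : θ₁ ≤ δ / 2 := min_le_left _ _
  have hsin : 0 < Real.sin θ₁ :=
    Real.sin_pos_of_pos_of_lt_pi hθ₁pos (by linarith [Real.pi_gt_three])
  set S : ℝ := c + 2 * n with hS
  have hSpos : 0 < S := by positivity
  set ρ : ℝ := Real.sin θ₁ / (S + 1) with hρ
  have hρpos : 0 < ρ := by positivity
  refine ⟨η, ρ, hρpos, ?_⟩
  intro ξ hξ
  -- bounds on ω₀ and ν coordinates
  have habs : ∀ (w : Fin n → ℝ), (∑ i, w i ^ 2 = 1) → ∀ i, |w i| ≤ 1 := by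
    intro w hw i
    rw [abs_le]
    constructor <;> nlinarith [Finset.single_le_sum (f := fun j => w j ^ 2)
      (fun j _ => sq_nonneg (w j)) (Finset.mem_univ i)]
  have hω₀b := habs ω₀ hω₀
  have hνb := habs ν hν1
  -- the curve of directions
  set ωθ : ℝ → Fin n → ℝ := fun θ => Real.cos θ • ω₀ + Real.sin θ • ν with hωθ
  have sph : ∀ θ, onSphere n (ωθ θ) := by
    intro θ
    have expand : ∀ i, (ωθ θ) i ^ 2 =
        Real.cos θ ^ 2 * ω₀ i ^ 2 + Real.sin θ ^ 2 * ν i ^ 2 +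
          (2 * Real.cos θ * Real.sin θ) * (ν i * ω₀ i) := by
      intro i; simp only [hωθ, Pi.add_apply, Pi.smul_apply, smul_eq_mul]; ring
    unfold onSphere
    rw [Finset.sum_congr rfl fun i _ => expand i]
    rw [Finset.sum_add_distrib, Finset.sum_add_distrib, ← Finset.mul_sum, ← Finset.mul_sum,
      ← Finset.mul_sum, hω₀, hν1, hν2]
    simpa using Real.cos_sq_add_sin_sq θ
  have ball : ∀ θ, |θ| ≤ θ₁ → inBall n ω₀ δ (ωθ θ) := by
    intro θ hθ
    refine ⟨sph θ, ?_⟩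
    have expand : ∀ i, ((ωθ θ) i - ω₀ i) ^ 2 =
        (Real.cos θ - 1) ^ 2 * ω₀ i ^ 2 + Real.sin θ ^ 2 * ν i ^ 2 +
          (2 * (Real.cos θ - 1) * Real.sin θ) * (ν i * ω₀ i) := by
      intro i; simp only [hωθ, Pi.add_apply, Pi.smul_apply, smul_eq_mul]; ring
    rw [Finset.sum_congr rfl fun i _ => expand i]
    rw [Finset.sum_add_distrib, Finset.sum_add_distrib, ← Finset.mul_sum, ← Finset.mul_sum,
      ← Finset.mul_sum, hω₀, hν1, hν2]
    have hcos := Real.one_sub_sq_div_two_le_cos (x := θ)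
    have h1 : (Real.cos θ - 1) ^ 2 * 1 + Real.sin θ ^ 2 * 1 + 2 * (Real.cos θ - 1) * Real.sin θ * 0
        = 2 - 2 * Real.cos θ := by
      have := Real.cos_sq_add_sin_sq θ
      nlinarith [this]
    rw [h1]
    have h2 : 2 - 2 * Real.cos θ ≤ θ ^ 2 := by nlinarith [hcos]
    have h3 : θ ^ 2 ≤ θ₁ ^ 2 := by
      have := abs_le.mp hθ
      nlinarith [this.1, this.2]
    have h4 : θ₁ ^ 2 < δ ^ 2 := by nlinarith [hθ₁δ, hθ₁pos, hδ]
    linarith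
  -- the function whose zero we seek
  set D₀ : ℝ := ∑ j, ω₀ j * ξ j.succ with hD₀
  set D₁ : ℝ := ∑ j, ν j * ξ j.succ with hD₁
  set g : ℝ → ℝ := fun θ => c * ξ 0 + Real.cos θ * D₀ + Real.sin θ * D₁ with hg
  have gexpand : ∀ θ, ∑ i, ld n c (ωθ θ) i * ξ i = g θ := by
    intro θ
    unfold ld
    rw [Fin.sum_univ_succ]
    simp only [Fin.cons_zero, Fin.cons_succ, hg, hωθ, Pi.add_apply, Pi.smul_apply, smul_eq_mul]
    rw [hD₀, hD₁, Finset.mul_sum, Finset.mul_sum, add_assoc, ← Finset.sum_add_distrib]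
    congr 1
    exact Finset.sum_congr rfl fun j _ => by ring
  -- value at the center η
  have hη0 : η 0 = 0 := by simp [hη]
  have hηsucc : ∀ j : Fin n, η j.succ = ν j := by intro j; simp [hη]
  have hΔ : ∀ j : Fin n, |ξ j.succ - ν j| < ρ := by
    intro j; have := hξ j.succ; rwa [hηsucc j] at this
  have hξ0 : |ξ 0| < ρ := by have := hξ 0; rwa [hη0, sub_zero] at this
  have hE₀ : ∑ j, ω₀ j * ν j = 0 := by
    rw [← hν2]; exact Finset.sum_congr rfl fun j _ => mul_comm _ _
  have hE₁ : ∑ j, ν j * ν j = 1 := by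
    rw [← hν1]; exact Finset.sum_congr rfl fun j _ => (sq (ν j)).symm
  set A₀ : ℝ := ∑ j, ω₀ j * (ξ j.succ - ν j) with hA₀
  set A₁ : ℝ := ∑ j, ν j * (ξ j.succ - ν j) with hA₁
  have habssum : ∀ (w : Fin n → ℝ), (∀ j, |w j| ≤ 1) →
      |∑ j, w j * (ξ j.succ - ν j)| ≤ n * ρ := by
    intro w hw
    calc |∑ j, w j * (ξ j.succ - ν j)| ≤ ∑ j, |w j * (ξ j.succ - ν j)| :=
          Finset.abs_sum_le_sum_abs _ _
      _ ≤ ∑ _j : Fin n, ρ := by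
          apply Finset.sum_le_sum
          intro j _
          rw [abs_mul]
          calc |w j| * |ξ j.succ - ν j| ≤ 1 * ρ :=
                mul_le_mul (hw j) (hΔ j).le (abs_nonneg _) one_pos.le
            _ = ρ := one_mul ρ
      _ = n * ρ := by simp [mul_comm]
  have hA₀b : |A₀| ≤ n * ρ := habssum ω₀ hω₀b
  have hA₁b : |A₁| ≤ n * ρ := habssum ν hνb
  have hD₀e : D₀ = A₀ := by
    have h5 : ∀ j : Fin n, ω₀ j * ξ j.succ = ω₀ j * (ξ j.succ - ν j) + ω₀ j * ν j :=
      fun j => by ring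
    rw [hD₀, hA₀, Finset.sum_congr rfl fun j _ => h5 j, Finset.sum_add_distrib, hE₀, add_zero]
  have hD₁e : D₁ = A₁ + 1 := by
    have h5 : ∀ j : Fin n, ν j * ξ j.succ = ν j * (ξ j.succ - ν j) + ν j * ν j :=
      fun j => by ring
    rw [hD₁, hA₁, Finset.sum_congr rfl fun j _ => h5 j, Finset.sum_add_distrib, hE₁]
  have key1 : ∀ θ, |g θ - Real.sin θ| ≤ S * ρ := by
    intro θ
    have : g θ - Real.sin θ = c * ξ 0 + Real.cos θ * A₀ + Real.sin θ * A₁ := by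
      rw [hg]; simp only []; rw [hD₀e, hD₁e]; ring
    rw [this]
    have h1 : |c * ξ 0 + Real.cos θ * A₀ + Real.sin θ * A₁|
        ≤ |c * ξ 0| + |Real.cos θ * A₀| + |Real.sin θ * A₁| :=
      abs_add_three _ _ _
    have h2 : |c * ξ 0| ≤ c * ρ := by
      rw [abs_mul, abs_of_pos hc]
      exact mul_le_mul_of_nonneg_left hξ0.le hc.le
    have h3 : |Real.cos θ * A₀| ≤ n * ρ := by
      rw [abs_mul]
      calc |Real.cos θ| * |A₀| ≤ 1 * (n * ρ) :=
            mul_le_mul (Real.abs_cos_le_one θ) hA₀b (abs_nonneg _) one_pos.le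
        _ = n * ρ := one_mul _
    have h4 : |Real.sin θ * A₁| ≤ n * ρ := by
      rw [abs_mul]
      calc |Real.sin θ| * |A₁| ≤ 1 * (n * ρ) :=
            mul_le_mul (Real.abs_sin_le_one θ) hA₁b (abs_nonneg _) one_pos.le
        _ = n * ρ := one_mul _
    have h6 : c * ρ + ↑n * ρ + ↑n * ρ = S * ρ := by rw [hS]; ring
    linarith
  have hSρ : S * ρ < Real.sin θ₁ := by
    rw [hρ]
    rw [div_eq_mul_inv]
    have : S * (Real.sin θ₁ * (S + 1)⁻¹) = Real.sin θ₁ * (S * (S + 1)⁻¹) := by ring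
    rw [this]
    have h5 : S * (S + 1)⁻¹ < 1 := by
      rw [mul_inv_lt_iff₀ (by linarith)]
      linarith
    nlinarith [hsin]
  have hcont : Continuous g := by
    rw [hg]
    fun_prop
  have hgneg : g (-θ₁) ≤ 0 := by
    have := key1 (-θ₁)
    rw [Real.sin_neg] at this
    have := abs_le.mp this
    linarith [this.1, this.2, hSρ]
  have hgpos : 0 ≤ g θ₁ := by
    have := abs_le.mp (key1 θ₁)
    linarith [this.1, this.2, hSρ]
  have hmem : (0:ℝ) ∈ Set.Icc (g (-θ₁)) (g θ₁) := ⟨hgneg, hgpos⟩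
  have := intermediate_value_Icc (by linarith : -θ₁ ≤ θ₁) hcont.continuousOn hmem
  obtain ⟨θ, hθmem, hθ0⟩ := this
  refine ⟨ωθ θ, ball θ ?_, ?_⟩
  · rw [abs_le]; exact ⟨hθmem.1, hθmem.2⟩
  · rw [gexpand θ, hθ0]

lemma myH_differentiable {n : ℕ} (f : (Fin (n + 1) → ℝ) → ℂ)
    (hf : Continuous f) (hsupp : HasCompactSupport f)
    (α β : (Fin (n + 1) → ℝ) → ℝ) (hα : Continuous α) (hβ : Continuous β) :
    Differentiable ℂ (fun z : ℂ =>
      ∫ y : Fin (n + 1) → ℝ, Complex.exp (((α y : ℂ) + z * (β y : ℂ)) * Complex.I) * f y) := by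
  intro z₀
  set F : ℂ → (Fin (n + 1) → ℝ) → ℂ := fun z y =>
    Complex.exp (((α y : ℂ) + z * (β y : ℂ)) * Complex.I) * f y with hF
  set F' : ℂ → (Fin (n + 1) → ℝ) → ℂ := fun z y =>
    (Complex.exp (((α y : ℂ) + z * (β y : ℂ)) * Complex.I) * ((β y : ℂ) * Complex.I)) * f y
    with hF'
  obtain ⟨M, hM⟩ : ∃ M, ∀ y ∈ tsupport f, |β y| ≤ M :=
    hsupp.isCompact.exists_bound_of_continuousOn hβ.continuousOn |>.imp
      fun M hM y hy => by simpa using hM y hy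
  have hM0 : 0 ≤ max M 0 := le_max_right _ _
  set C : ℝ := max M 0 * Real.exp (max M 0 * (‖z₀‖ + 1)) with hC
  have hCpos : 0 ≤ C := by positivity
  have hFcont : ∀ z, Continuous (F z) := by
    intro z
    apply Continuous.mul ?_ hf
    apply Complex.continuous_exp.comp
    fun_prop
  have hF'cont : Continuous (F' z₀) := by
    apply Continuous.mul (Continuous.mul ?_ (by fun_prop)) hf
    apply Complex.continuous_exp.comp
    fun_prop
  have hnorm : ∀ z y, ‖F' z y‖
      = Real.exp (-(β y) * z.im) * |β y| * ‖f y‖ := by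
    intro z y
    have e1 : ‖Complex.exp (((α y : ℂ) + z * (β y : ℂ)) * Complex.I)‖
        = Real.exp (-(β y) * z.im) := by
      rw [Complex.norm_exp]
      congr 1
      simp [Complex.mul_re, Complex.mul_im]
      ring
    have e2 : ‖(β y : ℂ) * Complex.I‖ = |β y| := by
      simp
    rw [hF']
    simp only [norm_mul, e1, e2]
  have hbound : ∀ z ∈ Metric.ball z₀ 1, ∀ y, ‖F' z y‖ ≤ C * ‖f y‖ := by
    intro z hz y
    by_cases hy : y ∈ tsupport f
    · rw [hnorm]
      have h1 : |β y| ≤ max M 0 := le_trans (hM y hy) (le_max_left _ _)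
      have h2 : |z.im| ≤ ‖z₀‖ + 1 := by
        have := Complex.abs_im_le_norm z
        have h3 : ‖z‖ ≤ ‖z₀‖ + 1 := by
          have := mem_ball_iff_norm.mp hz
          calc ‖z‖ = ‖z‖ := rfl
            _ = ‖z₀ + (z - z₀)‖ := by ring_nf
            _ ≤ ‖z₀‖ + ‖z - z₀‖ := norm_add_le _ _
            _ ≤ ‖z₀‖ + 1 := by linarith [this]
        linarith
      have h4 : -(β y) * z.im ≤ max M 0 * (‖z₀‖ + 1) := by
        calc -(β y) * z.im ≤ |(-(β y)) * z.im| := le_abs_self _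
          _ = |β y| * |z.im| := by rw [abs_mul, abs_neg]
          _ ≤ max M 0 * (‖z₀‖ + 1) :=
              mul_le_mul h1 h2 (abs_nonneg _) hM0
      rw [hC]
      have h5 : Real.exp (-(β y) * z.im) ≤ Real.exp (max M 0 * (‖z₀‖ + 1)) :=
        Real.exp_le_exp.mpr h4
      calc Real.exp (-(β y) * z.im) * |β y| * ‖f y‖
          ≤ Real.exp (max M 0 * (‖z₀‖ + 1)) * (max M 0) * ‖f y‖ := by
            apply mul_le_mul_of_nonneg_right _ (norm_nonneg _)
            exact mul_le_mul h5 h1 (abs_nonneg _) (Real.exp_pos _).le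
        _ = max M 0 * Real.exp (max M 0 * (‖z₀‖ + 1)) * ‖f y‖ := by ring
    · have : f y = 0 := image_eq_zero_of_notMem_tsupport hy
      rw [hF']
      simp [this]
  have hderiv : ∀ y, ∀ z ∈ Metric.ball z₀ 1, HasDerivAt (fun z => F z y) (F' z y) z := by
    intro y z _
    have h1 : HasDerivAt (fun z : ℂ => ((α y : ℂ) + z * (β y : ℂ)) * Complex.I)
        ((β y : ℂ) * Complex.I) z := by
      have : HasDerivAt (fun z : ℂ => (α y : ℂ) + z * (β y : ℂ)) ((β y : ℂ)) z := by
        simpa using ((hasDerivAt_id z).mul_const ((β y : ℂ))).const_add ((α y : ℂ))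
      simpa using this.mul_const Complex.I
    exact (h1.cexp).mul_const (f y)
  have hsuppF : HasCompactSupport (F z₀) := by
    apply HasCompactSupport.intro hsupp
    intro y hy
    simp [hF, image_eq_zero_of_notMem_tsupport hy]
  have hint : Integrable (F z₀) := (hFcont z₀).integrable_of_hasCompactSupport hsuppF
  have hfint : Integrable f := hf.integrable_of_hasCompactSupport hsupp
  have := hasDerivAt_integral_of_dominated_loc_of_deriv_le (F := F) (F' := F')
    (x₀ := z₀) (s := Metric.ball z₀ 1) (bound := fun y => C * ‖f y‖) (Metric.ball_mem_nhds z₀ one_pos)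
    (Filter.Eventually.of_forall fun z => (hFcont z).aestronglyMeasurable)
    hint hF'cont.aestronglyMeasurable
    (Filter.Eventually.of_forall fun y => fun z hz => hbound z hz y)
    (hfint.norm.const_mul C)
    (Filter.Eventually.of_forall fun y => fun z hz => hderiv y z hz)
  exact ⟨_, this.2⟩

lemma zero_of_entire (H : ℂ → ℂ) (hd : Differentiable ℂ H) (ε : ℝ) (hε : 0 < ε)
    (hz : ∀ t : ℝ, |t - 1| < ε → H t = 0) : ∀ z, H z = 0 := by
  have hana : AnalyticOnNhd ℂ H Set.univ :=
    hd.differentiableOn.analyticOnNhd isOpen_univ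
  have htend : Filter.Tendsto (fun t : ℝ => (t : ℂ)) (nhdsWithin (1:ℝ) {(1:ℝ)}ᶜ)
      (nhdsWithin (1:ℂ) {(1:ℂ)}ᶜ) := by
    rw [tendsto_nhdsWithin_iff]
    constructor
    · exact (Complex.continuous_ofReal.tendsto 1).mono_left nhdsWithin_le_nhds
    · filter_upwards [self_mem_nhdsWithin] with t ht
      simp only [Set.mem_compl_iff, Set.mem_singleton_iff] at ht ⊢
      exact fun hc => ht (by exact_mod_cast hc)
  have hev : ∀ᶠ (t : ℝ) in nhdsWithin (1:ℝ) {(1:ℝ)}ᶜ, H (t : ℂ) = 0 := by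
    apply Filter.Eventually.filter_mono nhdsWithin_le_nhds
    filter_upwards [Metric.ball_mem_nhds (1 : ℝ) hε] with t ht
    exact hz t (by simpa [Real.dist_eq] using ht)
  have hfreq : ∃ᶠ z in nhdsWithin (1:ℂ) {(1:ℂ)}ᶜ, H z = 0 :=
    htend.frequently hev.frequently
  have := hana.eqOn_zero_of_preconnected_of_frequently_eq_zero isPreconnected_univ
    (Set.mem_univ (1 : ℂ)) hfreq
  intro z
  exact this (Set.mem_univ z)

/-- If the light ray transform of a smooth compactly supported scalar
function vanishes for all base points and all `ω ∈ B_n(ω₀, δ)`, then `f = 0`. -/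
theorem lrt_scalar_partial_injectivity
    (n : ℕ) (hn : 2 ≤ n) (c : ℝ) (hc : 0 < c)
    (ω₀ : Fin n → ℝ) (hω₀ : onSphere n ω₀) (δ : ℝ) (hδ : 0 < δ)
    (f : (Fin (n + 1) → ℝ) → ℂ)
    (hreg : ContDiff ℝ (⊤ : ℕ∞) f) (hsupp : HasCompactSupport f)
    (h : ∀ (x : Fin (n + 1) → ℝ) (ω : Fin n → ℝ), inBall n ω₀ δ ω →
      lrt0 n c f x ω = 0) :
    ∀ x, f x = 0 := by
  classical
  have hfc : Continuous f := hreg.continuous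
  obtain ⟨η, ρ, hρ, hint⟩ := interior_zero n hn c hc ω₀ hω₀ δ hδ
  have hnear : ∀ ξ : Fin (n + 1) → ℝ, (∀ i, |ξ i - η i| < ρ) → myF n f ξ = 0 := by
    intro ξ hξ
    obtain ⟨ω, hb, hdot⟩ := hint ξ hξ
    exact slice_vanish n c hc f hfc hsupp ω (sphere_abs_le_one n ω hb.1)
      (fun x => h x ω hb) ξ hdot
  have hall : ∀ ξ, myF n f ξ = 0 := by
    intro ξ
    set b : Fin (n + 1) → ℝ := η - ξ with hb
    set α : (Fin (n + 1) → ℝ) → ℝ := fun y => -2 * Real.pi * ∑ i, y i * ξ i with hα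
    set β : (Fin (n + 1) → ℝ) → ℝ := fun y => -2 * Real.pi * ∑ i, y i * b i with hβ
    set H : ℂ → ℂ := fun z =>
      ∫ y : Fin (n + 1) → ℝ, Complex.exp (((α y : ℂ) + z * (β y : ℂ)) * Complex.I) * f y
      with hH
    have hαc : Continuous α := by fun_prop
    have hβc : Continuous β := by fun_prop
    have hdiff : Differentiable ℂ H := myH_differentiable f hfc hsupp α β hαc hβc
    have hreal : ∀ t : ℝ, H ((t : ℝ) : ℂ) = myF n f (ξ + t • b) := by
      intro t
      have harg : ∀ y : Fin (n + 1) → ℝ,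
          ((α y : ℂ) + ((t : ℝ) : ℂ) * (β y : ℂ)) * Complex.I
            = ((-2 * Real.pi * (∑ i, y i * (ξ + t • b) i) : ℝ) : ℂ) * Complex.I := by
        intro y
        have hsum : ∑ i, y i * (ξ + t • b) i = (∑ i, y i * ξ i) + t * ∑ i, y i * b i := by
          simp only [Pi.add_apply, Pi.smul_apply, smul_eq_mul, mul_add,
            Finset.sum_add_distrib, Finset.mul_sum]
          congr 1
          exact Finset.sum_congr rfl fun i _ => by ring
        rw [hα, hβ]
        rw [hsum]
        push_cast
        ring
      simp only [hH, myF]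
      congr 1
      funext y
      rw [harg y]
    set B : ℝ := 1 + ∑ i, |b i| with hB
    have hBpos : 0 < B := by
      rw [hB]
      have : (0:ℝ) ≤ ∑ i, |b i| := Finset.sum_nonneg fun i _ => abs_nonneg _
      linarith
    have hbleB : ∀ i, |b i| ≤ B := by
      intro i
      rw [hB]
      have := Finset.single_le_sum (f := fun j => |b j|)
        (fun j _ => abs_nonneg _) (Finset.mem_univ i)
      linarith
    have hzero : ∀ t : ℝ, |t - 1| < ρ / B → H ((t : ℝ) : ℂ) = 0 := by
      intro t ht
      rw [hreal t]
      apply hnear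
      intro i
      have heq : (ξ + t • b) i - η i = (t - 1) * b i := by
        simp only [hb, Pi.add_apply, Pi.smul_apply, Pi.sub_apply, smul_eq_mul]
        ring
      rw [heq, abs_mul]
      calc |t - 1| * |b i| ≤ |t - 1| * B :=
            mul_le_mul_of_nonneg_left (hbleB i) (abs_nonneg _)
        _ < (ρ / B) * B := by exact mul_lt_mul_of_pos_right ht hBpos
        _ = ρ := div_mul_cancel₀ _ hBpos.ne'
    have hH0 := zero_of_entire H hdiff (ρ / B) (div_pos hρ hBpos) hzero 0
    rw [show ((0:ℂ)) = (((0:ℝ) : ℝ) : ℂ) by norm_num, hreal 0] at hH0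
    simpa using hH0
  -- Fourier inversion
  set e := (MeasurableEquiv.toLp 2 (Fin (n + 1) → ℝ)).symm with he
  set g : EuclideanSpace ℝ (Fin (n + 1)) → ℂ := fun v => f (e v) with hg
  have mpE := EuclideanSpace.volume_preserving_symm_measurableEquiv_toLp (Fin (n + 1))
  have hgF : ∀ w, FourierTransform.fourier g w = myF n f (e w) := by
    intro w
    rw [Real.fourier_eq', myF]
    rw [← (MeasurePreserving.symm e mpE).integral_comp' (f := e.symm)]
    congr 1
    funext y
    simp [g, e, PiLp.inner_apply, mul_comm]
  have h𝓕 : FourierTransform.fourier g = fun _ => (0 : ℂ) := by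
    funext w
    rw [hgF w, hall]
  have hgcont : Continuous g := by
    rw [hg]
    have hec : Continuous (⇑e) := by
      exact PiLp.continuous_ofLp 2 _
    exact hfc.comp hec
  have hgint : Integrable g := by
    have h2 := (mpE.integrable_comp_emb e.measurableEmbedding (g := f)).mpr
      (hfc.integrable_of_hasCompactSupport hsupp)
    exact h2
  have h0int : Integrable (FourierTransform.fourier g) := by
    rw [h𝓕]
    exact integrable_zero _ _ _
  have hinv := hgcont.fourierInv_fourier_eq hgint h0int
  rw [h𝓕] at hinv
  have hIzero : FourierTransformInv.fourierInv (fun _ : EuclideanSpace ℝ (Fin (n + 1)) => (0 : ℂ))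
      = fun _ => 0 := by
    funext v
    rw [Real.fourierInv_eq]
    simp
  rw [hIzero] at hinv
  intro x
  have hgx : g (e.symm x) = f x := by
    rw [hg]
    congr 1
  rw [← hgx, ← hinv]
end
end

section
/- Let n ≥ 2, m ≥ 0, c > 0, let f ∈ C_c^∞(ℝ^{1+n}; S^m), and let p, k be integers with 0 ≤ p ≤ k. Then for all (t,x) ∈ ℝ^{1+n} and all ω ∈ ℝ^n \ {0}: ((ω̃ · ∇_{t,x})^p L^{m,k} f)((t,x), ω) = (−1)^p (k!/(k−p)!) · L^{m,k−p} f((t,x), ω), where ω̃ · ∇_{t,x} = c ∂_t + Σ_{j=1}^{n} ω_j ∂_{x_j}. -/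
open MeasureTheory Finset

noncomputable section

lemma mlrt_step (n m : ℕ) (c : ℝ) (hc : 0 < c) (k : ℕ)
    (f : (Fin m → Fin (n + 1)) → (Fin (n + 1) → ℝ) → ℂ)
    (hreg : IsCc n m f) (ω : Fin n → ℝ) (y : Fin (n + 1) → ℝ) :
    lineDeriv ℝ (fun z => mlrt n m c (k + 1) f z ω) y (ld n c ω)
      = (-(k + 1) : ℂ) * mlrt n m c k f y ω := by
  set v := ld n c ω with hv
  have hv0 : v 0 = c := rfl
  set H : (Fin m → Fin (n + 1)) → ℝ → ℂ := fun i u => f i (y + u • v) with hH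
  have contH : ∀ i, Continuous (H i) := by
    intro i
    exact (hreg i).1.continuous.comp (by fun_prop)
  have cptH : ∀ i, HasCompactSupport (H i) := by
    intro i
    apply HasCompactSupport.intro
      (K := (fun z : Fin (n + 1) → ℝ => (z 0 - y 0) / c) '' tsupport (f i))
    · exact ((hreg i).2).image (by fun_prop)
    · intro u hu
      by_contra h
      apply hu
      refine ⟨y + u • v, subset_tsupport _ h, ?_⟩
      simp only [Pi.add_apply, Pi.smul_apply, hv0, smul_eq_mul]
      field_simp
      ring
  set A : ℕ → (Fin m → Fin (n + 1)) → ℂ := fun r i => ∫ u : ℝ, (u : ℂ) ^ r * H i u with hA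
  have intA : ∀ r i, Integrable (fun u : ℝ => (u : ℂ) ^ r * H i u) := by
    intro r i
    exact (Continuous.mul (by fun_prop) (contH i)).integrable_of_hasCompactSupport
      ((cptH i).mul_left)
  -- the integral as a polynomial in the shift parameter
  have key : ∀ (i : Fin m → Fin (n + 1)) (ε : ℝ),
      (∫ s : ℝ, (s : ℂ) ^ (k + 1) * f i (y + ε • v + s • v))
        = ∑ r ∈ range (k + 2),
            ((-1) ^ (r + (k + 1)) * ((k + 1).choose r : ℂ) * A r i) * (ε : ℂ) ^ (k + 1 - r) := by
    intro i ε
    have h1 : (fun s : ℝ => (s : ℂ) ^ (k + 1) * f i (y + ε • v + s • v))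
        = fun s : ℝ => (fun u : ℝ => ((u : ℂ) - (ε : ℂ)) ^ (k + 1) * H i u) (s + ε) := by
      funext s
      have harg : y + ε • v + s • v = y + (s + ε) • v := by
        rw [add_smul, add_assoc]; ring_nf
      rw [harg]
      push_cast
      ring_nf
      rfl
    rw [h1, integral_add_right_eq_self (μ := volume)
      (fun u : ℝ => ((u : ℂ) - (ε : ℂ)) ^ (k + 1) * H i u) ε]
    have h2 : (fun u : ℝ => ((u : ℂ) - (ε : ℂ)) ^ (k + 1) * H i u)
        = fun u : ℝ => ∑ r ∈ range (k + 2),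
            ((-1) ^ (r + (k + 1)) * ((k + 1).choose r : ℂ) * (ε : ℂ) ^ (k + 1 - r))
              * ((u : ℂ) ^ r * H i u) := by
      funext u
      rw [sub_pow, sum_mul]
      congr 1 with r
      ring
    rw [h2, integral_finset_sum]
    · congr 1 with r
      rw [integral_const_mul]
      ring
    · intro r _
      exact (intA r i).const_mul _
  -- now compute the line derivative
  have hfun : (fun t : ℝ => mlrt n m c (k + 1) f (y + t • v) ω)
      = fun t : ℝ => ∑ i : Fin m → Fin (n + 1),
          (∏ j, (ld n c ω (i j) : ℂ)) *
            ∑ r ∈ range (k + 2),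
              ((-1) ^ (r + (k + 1)) * ((k + 1).choose r : ℂ) * A r i) * (t : ℂ) ^ (k + 1 - r) := by
    funext t
    unfold mlrt
    congr 1 with i
    rw [key i t]
  have hder : HasDerivAt
      (fun t : ℝ => ∑ i : Fin m → Fin (n + 1),
          (∏ j, (ld n c ω (i j) : ℂ)) *
            ∑ r ∈ range (k + 2),
              ((-1) ^ (r + (k + 1)) * ((k + 1).choose r : ℂ) * A r i) * (t : ℂ) ^ (k + 1 - r))
      (∑ i : Fin m → Fin (n + 1),
          (∏ j, (ld n c ω (i j) : ℂ)) *
            ∑ r ∈ range (k + 2),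
              ((-1) ^ (r + (k + 1)) * ((k + 1).choose r : ℂ) * A r i) *
                ((k + 1 - r : ℕ) * (0 : ℂ) ^ (k + 1 - r - 1))) (0 : ℝ) := by
    apply HasDerivAt.fun_sum
    intro i _
    apply HasDerivAt.const_mul
    apply HasDerivAt.fun_sum
    intro r _
    exact ((hasDerivAt_pow (k + 1 - r) (0 : ℂ)).comp_ofReal).const_mul _
  have hval : ∀ i : Fin m → Fin (n + 1),
      (∑ r ∈ range (k + 2),
          ((-1) ^ (r + (k + 1)) * ((k + 1).choose r : ℂ) * A r i) *
            ((k + 1 - r : ℕ) * (0 : ℂ) ^ (k + 1 - r - 1)))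
        = (-(k + 1) : ℂ) * A k i := by
    intro i
    rw [Finset.sum_eq_single k]
    · have h1 : k + 1 - k = 1 := by omega
      have h2 : (-1 : ℂ) ^ (k + (k + 1)) = -1 := by
        rw [show k + (k + 1) = 2 * k + 1 by omega, pow_succ, pow_mul]
        simp
      rw [h1, h2, Nat.choose_succ_self_right]
      push_cast
      norm_num
    · intro r _ hrk
      rcases lt_or_ge r (k + 1) with hr | hr
      · have : k + 1 - r - 1 ≠ 0 := by omega
        rw [zero_pow this]
        ring
      · have : k + 1 - r = 0 := by omega
        rw [this]
        simp
    · intro h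
      exact absurd (Finset.mem_range.mpr (by omega)) h
  have : lineDeriv ℝ (fun z => mlrt n m c (k + 1) f z ω) y v
      = ∑ i : Fin m → Fin (n + 1),
          (∏ j, (ld n c ω (i j) : ℂ)) * ((-(k + 1) : ℂ) * A k i) := by
    rw [lineDeriv]
    have : (fun t : ℝ => (fun z => mlrt n m c (k + 1) f z ω) (y + t • v))
        = fun t : ℝ => mlrt n m c (k + 1) f (y + t • v) ω := rfl
    rw [this, hfun, hder.deriv]
    congr 1 with i
    rw [hval i]
  rw [this]
  unfold mlrt
  rw [Finset.mul_sum]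
  congr 1 with i
  ring

lemma lineDeriv_const_mul' {n : ℕ} (a : ℂ) (F : (Fin (n + 1) → ℝ) → ℂ)
    (x v : Fin (n + 1) → ℝ) :
    lineDeriv ℝ (fun y => a * F y) x v = a * lineDeriv ℝ F x v := by
  simp only [lineDeriv]
  exact deriv_const_mul_field a

lemma iter_const_mul {n : ℕ} (v : Fin (n + 1) → ℝ) (p : ℕ) (a : ℂ)
    (F : (Fin (n + 1) → ℝ) → ℂ) :
    (fun (G : (Fin (n + 1) → ℝ) → ℂ) (y : Fin (n + 1) → ℝ) => lineDeriv ℝ G y v)^[p]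
        (fun y => a * F y)
      = fun y => a *
          ((fun (G : (Fin (n + 1) → ℝ) → ℂ) (y : Fin (n + 1) → ℝ) =>
            lineDeriv ℝ G y v)^[p] F y) := by
  induction p generalizing F with
  | zero => simp
  | succ p ih =>
    rw [Function.iterate_succ_apply, Function.iterate_succ_apply]
    have h1 : (fun y => lineDeriv ℝ (fun z => a * F z) y v)
        = fun y => a * lineDeriv ℝ F y v := by
      funext y; exact lineDeriv_const_mul' a F y v
    rw [h1]
    exact ih _

/-- `((ω̃·∇_{t,x})^p L^{m,k} f)((t,x), ω) = (−1)^p (k!/(k−p)!) ·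
L^{m,k−p} f((t,x), ω)` for `0 ≤ p ≤ k`, where the directional derivative along `ω̃`
is the line derivative `F ↦ lineDeriv ℝ F · ω̃`. -/
theorem mlrt_momentum_descent
    (n m : ℕ) (hn : 2 ≤ n) (c : ℝ) (hc : 0 < c)
    (f : (Fin m → Fin (n + 1)) → (Fin (n + 1) → ℝ) → ℂ)
    (hsym : IsSymmF n m f) (hreg : IsCc n m f)
    (p k : ℕ) (hpk : p ≤ k)
    (x : Fin (n + 1) → ℝ) (ω : Fin n → ℝ) (hω : ω ≠ 0) :
    (fun (F : (Fin (n + 1) → ℝ) → ℂ) (y : Fin (n + 1) → ℝ) =>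
        lineDeriv ℝ F y (ld n c ω))^[p] (fun y => mlrt n m c k f y ω) x
      = (-1 : ℂ) ^ p * ((k.factorial : ℂ) / ((k - p).factorial : ℂ)) *
          mlrt n m c (k - p) f x ω := by
  revert hpk
  induction p generalizing k with
  | zero =>
    intro _
    simp only [Function.iterate_zero, id_eq, pow_zero, Nat.sub_zero, one_mul]
    rw [div_self (by exact_mod_cast k.factorial_ne_zero), one_mul]
  | succ p ih =>
    intro hpk
    obtain ⟨k', rfl⟩ : ∃ k', k = k' + 1 := ⟨k - 1, by omega⟩
    rw [Function.iterate_succ_apply]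
    have h1 : (fun y => lineDeriv ℝ (fun z => mlrt n m c (k' + 1) f z ω) y (ld n c ω))
        = fun y => (-(k' + 1) : ℂ) * mlrt n m c k' f y ω := by
      funext y; exact mlrt_step n m c hc k' f hreg ω y
    simp only [h1, iter_const_mul]
    rw [ih k' (by omega)]
    have hk : k' + 1 - (p + 1) = k' - p := by omega
    rw [hk]
    have hfac : ((k' + 1).factorial : ℂ) = (k' + 1) * k'.factorial := by
      push_cast [Nat.factorial_succ]; ring
    rw [hfac]
    push_cast
    ring
end
end

section
/- Let n ≥ 2, m ≥ 1, c > 0, let f ∈ C_c^∞(ℝ^{1+n}; S^m), fix an index p ∈ {1,…,n} and an integer k with 0 ≤ k ≤ m−1. Then for all (t,x) ∈ ℝ^{1+n} and all ω ∈ ℝ^n \ {0}: m · L^{m−1,k}((f)_p)((t,x), ω) = ∂_{ω_p} L^{m,k} f((t,x), ω) − ∂_{x_p} L^{m,k+1} f((t,x), ω). -/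
open MeasureTheory Finset

noncomputable section

lemma key_hasDerivAt {n : ℕ} (g : (Fin (n + 1) → ℝ) → ℂ) (hg : ContDiff ℝ (⊤ : ℕ∞) g)
    (hgs : HasCompactSupport g) (x u v : Fin (n + 1) → ℝ) (hu : u 0 ≠ 0) (hv : v 0 = 0)
    (r : ℕ) (w : ℝ → ℝ) (hw : Continuous w) (hwb : ∀ s, |w s| ≤ 1 + |s|) :
    HasDerivAt (fun t : ℝ => ∫ s : ℝ, (s : ℂ) ^ r * g (x + s • u + (t * w s) • v))
      (∫ s : ℝ, (s : ℂ) ^ r * (w s : ℂ) * (fderiv ℝ g (x + s • u) v)) 0 := by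
  -- bound on fderiv
  obtain ⟨M, hM⟩ : ∃ M, ∀ y, ‖fderiv ℝ g y‖ ≤ M := by
    obtain ⟨M, hM⟩ := ((hg.continuous_fderiv (by simp)).norm).bounded_above_of_compact_support
      ((hgs.fderiv (𝕜 := ℝ)).norm)
    exact ⟨M, fun y => by simpa using hM y⟩
  -- bound on time coordinate of the support
  obtain ⟨R, hR⟩ : ∃ R, ∀ y ∈ tsupport g, |y 0| ≤ R := by
    obtain ⟨R, hR⟩ := (isBounded_iff_forall_norm_le).1
      ((hgs.isCompact.image (continuous_apply (0 : Fin (n + 1)))).isBounded)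
    exact ⟨R, fun y hy => hR _ (Set.mem_image_of_mem _ hy)⟩
  set B : ℝ := (|R| + |x 0| + 1) / |u 0| with hB
  have hBpos : 0 < B := div_pos (by positivity) (abs_pos.2 hu)
  -- points outside [-B, B] are outside the support
  have hvan : ∀ (a : ℝ) (s : ℝ), s ∉ Set.Icc (-B) B →
      (x + s • u + a • v) ∉ tsupport g := by
    intro a s hs hmem
    have h0 : (x + s • u + a • v) 0 = x 0 + s * u 0 := by
      simp [hv]
    have h1 : |x 0 + s * u 0| ≤ R := by rw [← h0]; exact hR _ hmem
    have hsB : B < |s| := by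
      rw [Set.mem_Icc, not_and_or] at hs
      rcases hs with h | h
      · push_neg at h; rw [abs_of_neg (by linarith)]; linarith
      · push_neg at h; rw [abs_of_pos (by linarith)]; exact h
    have hmul : |R| + |x 0| + 1 < |s| * |u 0| := by
      have := (div_lt_iff₀ (abs_pos.2 hu)).1 hsB
      linarith
    have h4 : |s| * |u 0| ≤ |x 0 + s * u 0| + |x 0| := by
      have h5 : s * u 0 = (x 0 + s * u 0) + (-(x 0)) := by ring
      calc |s| * |u 0| = |s * u 0| := (abs_mul s (u 0)).symm
        _ = |(x 0 + s * u 0) + (-(x 0))| := by rw [← h5]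
        _ ≤ |x 0 + s * u 0| + |x 0| := by
          have := abs_add_le (x 0 + s * u 0) (-(x 0)); simpa using this
    have := le_abs_self R
    linarith
  have hgd : Differentiable ℝ g := hg.differentiable (by simp)
  -- the family
  set F : ℝ → ℝ → ℂ := fun t s => (s : ℂ) ^ r * g (x + s • u + (t * w s) • v) with hF
  set F' : ℝ → ℝ → ℂ := fun t s =>
    (s : ℂ) ^ r * (w s : ℂ) * (fderiv ℝ g (x + s • u + (t * w s) • v) v) with hF'
  have hcont : ∀ t, Continuous fun s => x + s • u + (t * w s) • v := by
    intro t
    fun_prop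
  have hFcont : ∀ t, Continuous (F t) := fun t =>
    ((Complex.continuous_ofReal.pow r)).mul (hg.continuous.comp (hcont t))
  have hF'cont : ∀ t, Continuous (F' t) := by
    intro t
    apply Continuous.mul
    · exact (Complex.continuous_ofReal.pow r).mul (Complex.continuous_ofReal.comp hw)
    · have : Continuous fun y => (fderiv ℝ g y) v :=
        ((hg.continuous_fderiv (by simp))).clm_apply continuous_const
      exact (this.comp (hcont t)).comp continuous_id
  have key := hasDerivAt_integral_of_dominated_loc_of_deriv_le (μ := volume)
    (F := F) (F' := F') (x₀ := (0 : ℝ))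
    (bound := Set.indicator (Set.Icc (-B) B) fun s => |s| ^ r * (1 + |s|) * (M * ‖v‖))
    (Metric.ball_mem_nhds (0 : ℝ) one_pos)
    (Filter.Eventually.of_forall fun t => (hFcont t).aestronglyMeasurable)
    ?_ ((hF'cont 0).aestronglyMeasurable) ?_ ?_ ?_
  · refine key.2.congr_deriv ?_
    apply integral_congr_ae
    filter_upwards with s
    simp [hF']
  · -- integrability of F 0
    apply (hFcont 0).integrable_of_hasCompactSupport
    apply HasCompactSupport.intro (isCompact_Icc (a := -B) (b := B))
    intro s hs
    have := hvan (0 * w s) s hs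
    simp only [hF]
    rw [image_eq_zero_of_notMem_tsupport this, mul_zero]
  · -- bound
    filter_upwards with s
    intro t ht
    by_cases hs : s ∈ Set.Icc (-B) B
    · rw [Set.indicator_of_mem hs]
      have hfd : ‖(fderiv ℝ g (x + s • u + (t * w s) • v)) v‖ ≤ M * ‖v‖ :=
        le_trans (ContinuousLinearMap.le_opNorm _ _)
          (mul_le_mul_of_nonneg_right (hM _) (norm_nonneg _))
      simp only [hF', norm_mul, norm_pow, Complex.norm_real, Real.norm_eq_abs]
      apply mul_le_mul
        (mul_le_mul le_rfl (hwb s) (abs_nonneg _) (pow_nonneg (abs_nonneg _) _))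
        hfd (norm_nonneg _) (by positivity)
    · rw [Set.indicator_of_notMem hs]
      have h0 : fderiv ℝ g (x + s • u + (t * w s) • v) = 0 := by
        by_contra h
        exact hvan (t * w s) s hs (support_fderiv_subset ℝ (f := g) h)
      simp [hF', h0]
  · -- integrability of bound
    rw [integrable_indicator_iff measurableSet_Icc]
    apply ContinuousOn.integrableOn_compact isCompact_Icc
    fun_prop
  · -- differentiability
    filter_upwards with s
    intro t ht
    have hpath : HasDerivAt (fun t : ℝ => x + s • u + (t * w s) • v) ((w s) • v) t := by
      have h1 : HasDerivAt (fun t : ℝ => t * w s) (w s) t := hasDerivAt_mul_const _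
      exact (h1.smul_const v).const_add _
    have hgdiff := (hgd (x + s • u + (t * w s) • v)).hasFDerivAt
    have := hgdiff.comp_hasDerivAt t hpath
    have h2 := this.const_mul ((s : ℂ) ^ r)
    refine h2.congr_deriv ?_
    simp only [hF', ContinuousLinearMap.map_smul, Complex.real_smul]
    ring


lemma erase_last_eq (m : ℕ) :
    (univ : Finset (Fin (m + 1))).erase (Fin.last m) = univ.map Fin.castSuccEmb := by
  ext l
  simp only [mem_erase, mem_univ, and_true, mem_map, Fin.coe_castSuccEmb, exists_true_left]
  constructor
  · intro h
    obtain ⟨y, hy⟩ := Fin.exists_castSucc_eq.2 h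
    exact ⟨y, trivial, hy⟩
  · rintro ⟨j, -, rfl⟩
    exact (Fin.castSucc_lt_last j).ne

lemma sum_snoc {n m : ℕ} (H : (Fin (m + 1) → Fin (n + 1)) → ℂ) :
    ∑ x : Fin (m + 1) → Fin (n + 1), H x
    = ∑ p : Fin (n + 1) × (Fin m → Fin (n + 1)), H (Fin.snoc p.2 p.1) := by
  have hbij2 : Function.Bijective
      (fun p : Fin (n + 1) × (Fin m → Fin (n + 1)) =>
        (Fin.snoc p.2 p.1 : Fin (m + 1) → Fin (n + 1))) := by
    constructor
    · rintro ⟨b1, a1⟩ ⟨b2, a2⟩ h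
      simp only [Prod.mk.injEq]
      constructor
      · have := congrFun h (Fin.last m); simpa using this
      · funext l; have := congrFun h (Fin.castSucc l); simpa using this
    · intro x
      exact ⟨(x (Fin.last m), Fin.init x), Fin.snoc_init_self x⟩
  exact (Fintype.sum_bijective _ hbij2 _ _ (fun p => rfl)).symm

set_option maxHeartbeats 1000000 in
lemma comb {n m : ℕ} (u : Fin (n + 1) → ℂ) (q : Fin (n + 1))
    (v : Fin (n + 1) → ℝ) (hv : ∀ l, v l = if l = q then 1 else 0)
    (G : (Fin (m + 1) → Fin (n + 1)) → ℂ)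
    (hG : ∀ (σ : Equiv.Perm (Fin (m + 1))) (i : Fin (m + 1) → Fin (n + 1)), G (i ∘ σ) = G i) :
    ∑ i : Fin (m + 1) → Fin (n + 1),
      (∑ j, (∏ l ∈ univ.erase j, u (i l)) * ((v (i j) : ℝ) : ℂ)) * G i
      = ((m : ℂ) + 1) * ∑ a : Fin m → Fin (n + 1), (∏ j, u (a j)) * G (Fin.snoc a q) := by
  have main : ∀ j : Fin (m + 1),
      (∑ i : Fin (m + 1) → Fin (n + 1),
        ((∏ l ∈ univ.erase j, u (i l)) * ((v (i j) : ℝ) : ℂ)) * G i)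
      = ∑ a : Fin m → Fin (n + 1), (∏ l, u (a l)) * G (Fin.snoc a q) := by
    intro j
    set σ : Equiv.Perm (Fin (m + 1)) := Equiv.swap j (Fin.last m) with hσ
    have hbij : Function.Bijective (fun i : Fin (m + 1) → Fin (n + 1) => i ∘ σ) := by
      constructor
      · intro a b h
        funext l
        have := congrFun h (σ.symm l)
        simpa using this
      · intro i
        exact ⟨i ∘ σ.symm, by funext l; simp⟩
    rw [← Fintype.sum_bijective _ hbij _ _ (fun i => rfl)]
    -- now summand is for i ∘ σ
    have step : ∀ i : Fin (m + 1) → Fin (n + 1),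
        ((∏ l ∈ univ.erase j, u ((i ∘ σ) l)) * ((v ((i ∘ σ) j) : ℝ) : ℂ))
          * G (i ∘ σ)
        = ((∏ l ∈ univ.erase (Fin.last m), u (i l)) *
            ((v (i (Fin.last m)) : ℝ) : ℂ)) * G i := by
      intro i
      have h1 : (∏ l ∈ univ.erase j, u ((i ∘ σ) l))
          = ∏ l ∈ univ.erase (Fin.last m), u (i l) := by
        simp only [Function.comp_apply]
        apply Finset.prod_bij (fun l _ => σ l)
        · intro a ha
          simp only [mem_erase, mem_univ, and_true] at ha ⊢
          intro h
          apply ha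
          apply σ.injective
          rw [h, hσ, Equiv.swap_apply_left]
        · intro a _ b _ h
          exact σ.injective h
        · intro b hb
          simp only [mem_erase, mem_univ, and_true] at hb ⊢
          refine ⟨σ.symm b, ?_, σ.apply_symm_apply b⟩
          intro h
          apply hb
          rw [← σ.apply_symm_apply b, h, hσ, Equiv.swap_apply_left]
        · intro a _
          rfl
      have h2 : (i ∘ σ) j = i (Fin.last m) := by simp [hσ]
      rw [h1, h2, hG σ i]
    simp_rw [step]
    -- reindex via snoc
    rw [sum_snoc, Fintype.sum_prod_type]
    have hterm : ∀ (b : Fin (n + 1)) (a : Fin m → Fin (n + 1)),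
        (∏ l ∈ univ.erase (Fin.last m), u ((Fin.snoc a b : Fin (m + 1) → Fin (n + 1)) l)) *
          ((v ((Fin.snoc a b : Fin (m + 1) → Fin (n + 1)) (Fin.last m)) : ℝ) : ℂ) *
            G (Fin.snoc a b)
        = if b = q then (∏ l, u (a l)) * G (Fin.snoc a q) else 0 := by
      intro b a
      rw [Fin.snoc_last, hv b]
      by_cases hbq : b = q
      · subst hbq
        simp only [eq_self_iff_true, if_true, if_pos rfl, Complex.ofReal_one, mul_one]
        congr 1
        rw [erase_last_eq, Finset.prod_map]
        apply Finset.prod_congr rfl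
        intro l _
        show u ((Fin.snoc a b : Fin (m + 1) → Fin (n + 1)) (Fin.castSucc l)) = u (a l)
        rw [Fin.snoc_castSucc]
        
      · simp [hbq]
    simp_rw [hterm]
    rw [Finset.sum_comm]
    simp
  calc ∑ i : Fin (m + 1) → Fin (n + 1),
      (∑ j, (∏ l ∈ univ.erase j, u (i l)) * ((v (i j) : ℝ) : ℂ)) * G i
      = ∑ j : Fin (m + 1), ∑ i : Fin (m + 1) → Fin (n + 1),
          ((∏ l ∈ univ.erase j, u (i l)) * ((v (i j) : ℝ) : ℂ)) * G i := by
        rw [Finset.sum_comm]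
        exact Finset.sum_congr rfl fun i _ => by rw [Finset.sum_mul]
    _ = ∑ j : Fin (m + 1), ∑ a : Fin m → Fin (n + 1), (∏ l, u (a l)) * G (Fin.snoc a q) := by
        exact Finset.sum_congr rfl fun j _ => main j
    _ = ((m : ℂ) + 1) * ∑ a : Fin m → Fin (n + 1), (∏ l, u (a l)) * G (Fin.snoc a q) := by
        rw [Finset.sum_const, card_univ, Fintype.card_fin, nsmul_eq_mul]
        push_cast
        ring
  -- done except inner sum over last coordinate

/-- For a smooth compactly supported symmetric tensor field `f` of
rank `m + 1` (i.e. rank `≥ 1`), a spatial index `p ∈ {1,…,n}` and `0 ≤ k ≤ m`: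
`(m+1) · L^{m,k}((f)_p) = ∂_{ω_p} L^{m+1,k} f − ∂_{x_p} L^{m+1,k+1} f`,
where `(f)_p` is the rank-`m` field with components `((f)_p)_{i_1…i_m} = f_{i_1…i_m p}`
and the partial derivatives are line derivatives along the coordinate directions. -/
theorem mlrt_rank_reduction
    (n m : ℕ) (hn : 2 ≤ n) (c : ℝ) (hc : 0 < c)
    (f : (Fin (m + 1) → Fin (n + 1)) → (Fin (n + 1) → ℝ) → ℂ)
    (hsym : IsSymmF n (m + 1) f) (hreg : IsCc n (m + 1) f)
    (p : Fin n) (k : ℕ) (hk : k ≤ m)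
    (x : Fin (n + 1) → ℝ) (ω : Fin n → ℝ) (hω : ω ≠ 0) :
    ((m : ℂ) + 1) * mlrt n m c k (fun a y => f (Fin.snoc a p.succ) y) x ω
      = lineDeriv ℝ (fun w => mlrt n (m + 1) c k f x w) ω (Pi.single p 1)
        - lineDeriv ℝ (fun y => mlrt n (m + 1) c (k + 1) f y ω) x
            (Pi.single p.succ 1) := by
  set u : Fin (n + 1) → ℝ := ld n c ω with hu
  set v1 : Fin (n + 1) → ℝ := Pi.single p.succ (1 : ℝ) with hv1
  have hu0 : u 0 = c := rfl
  have hu0ne : u 0 ≠ 0 := by rw [hu0]; exact ne_of_gt hc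
  have hv10 : v1 0 = 0 := Pi.single_eq_of_ne (Fin.succ_ne_zero p).symm 1
  have hld : ∀ t : ℝ, ld n c (ω + t • (Pi.single p 1 : Fin n → ℝ)) = u + t • v1 := by
    intro t
    funext q
    refine Fin.cases ?_ ?_ q
    · show c = (u + t • v1) 0
      simp [hu0, hv10]
    · intro q'
      show (ω + t • (Pi.single p 1 : Fin n → ℝ)) q' = (u + t • v1) q'.succ
      have h1 : u q'.succ = ω q' := rfl
      have h2 : (Pi.single p 1 : Fin n → ℝ) q' = v1 q'.succ := by
        simp [hv1, Pi.single_apply, Fin.succ_inj]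
      simp only [Pi.add_apply, Pi.smul_apply, smul_eq_mul, h1, ← h2]
  -- components of the derivative
  set I0 : ((Fin (m + 1) → Fin (n + 1))) → ℂ :=
    fun i => ∫ s : ℝ, (s : ℂ) ^ k * f i (x + s • u) with hI0
  set Jd : ((Fin (m + 1) → Fin (n + 1))) → ℂ :=
    fun i => ∫ s : ℝ, (s : ℂ) ^ k * (s : ℂ) * (fderiv ℝ (f i) (x + s • u) v1) with hJd
  set Jd' : ((Fin (m + 1) → Fin (n + 1))) → ℂ :=
    fun i => ∫ s : ℝ, (s : ℂ) ^ (k + 1) * ((1 : ℝ) : ℂ) *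
      (fderiv ℝ (f i) (x + s • u) v1) with hJd'
  have hJeq : ∀ i, Jd i = Jd' i := by
    intro i
    simp only [hJd, hJd']
    congr 1
    funext s
    rw [pow_succ]
    push_cast
    ring
  -- derivative of the product factor
  have hPder : ∀ i : Fin (m + 1) → Fin (n + 1),
      HasDerivAt (fun t : ℝ => ∏ j, (((u + t • v1) (i j) : ℝ) : ℂ))
        (∑ j, (∏ l ∈ univ.erase j, ((u (i l) : ℝ) : ℂ)) * ((v1 (i j) : ℝ) : ℂ)) 0 := by
    intro i
    have hfac : ∀ j : Fin (m + 1), HasDerivAt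
        (fun t : ℝ => (((u + t • v1) (i j) : ℝ) : ℂ)) ((v1 (i j) : ℝ) : ℂ) 0 := by
      intro j
      have h1 : HasDerivAt (fun t : ℝ => u (i j) + t * v1 (i j)) (v1 (i j)) 0 := by
        simpa using (hasDerivAt_mul_const (v1 (i j))).const_add (u (i j))
      have h2 := h1.ofReal_comp
      simpa [Pi.add_apply, Pi.smul_apply, smul_eq_mul] using h2
    have h := HasDerivAt.fun_finsetProd (u := univ) (fun j (_ : j ∈ univ) => hfac j)
    have h2 : (∑ j, (∏ l ∈ univ.erase j, (((u + (0:ℝ) • v1) (i l) : ℝ) : ℂ)) •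
        ((v1 (i j) : ℝ) : ℂ)) = ∑ j, (∏ l ∈ univ.erase j, ((u (i l) : ℝ) : ℂ)) *
        ((v1 (i j) : ℝ) : ℂ) := by
      refine Finset.sum_congr rfl fun j _ => ?_
      rw [smul_eq_mul]
      congr 1
      refine Finset.prod_congr rfl fun l _ => ?_
      simp
    rw [h2] at h
    exact h
  -- derivative of the integral factor, ω-version
  have hIder : ∀ i : Fin (m + 1) → Fin (n + 1),
      HasDerivAt (fun t : ℝ => ∫ s : ℝ, (s : ℂ) ^ k * f i (x + s • (u + t • v1)))
        (Jd i) 0 := by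
    intro i
    have h := key_hasDerivAt (f i) (hreg i).1 (hreg i).2 x u v1 hu0ne hv10 k id
      continuous_id (fun s => by simp only [id_eq]; linarith [abs_nonneg s])
    have heq : (fun t : ℝ => ∫ s : ℝ, (s : ℂ) ^ k * f i (x + s • (u + t • v1)))
        = fun t : ℝ => ∫ s : ℝ, (s : ℂ) ^ k * f i (x + s • u + (t * id s) • v1) := by
      funext t
      congr 1
      funext s
      congr 2
      rw [smul_add, smul_smul, mul_comm s t, ← add_assoc]
      rfl
    rw [heq]
    exact h
  -- derivative of the x-shifted integral, x-version
  have hBder : ∀ i : Fin (m + 1) → Fin (n + 1),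
      HasDerivAt (fun t : ℝ => ∫ s : ℝ, (s : ℂ) ^ (k + 1) * f i (x + t • v1 + s • u))
        (Jd' i) 0 := by
    intro i
    have h := key_hasDerivAt (f i) (hreg i).1 (hreg i).2 x u v1 hu0ne hv10 (k + 1)
      (fun _ => 1) continuous_const (fun s => by
        rw [abs_one]
        linarith [abs_nonneg s])
    have heq : (fun t : ℝ => ∫ s : ℝ, (s : ℂ) ^ (k + 1) * f i (x + t • v1 + s • u))
        = fun t : ℝ => ∫ s : ℝ, (s : ℂ) ^ (k + 1) * f i (x + s • u + (t * 1) • v1) := by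
      funext t
      congr 1
      funext s
      congr 2
      rw [mul_one, add_right_comm]
    rw [heq]
    exact h
  -- full ω-derivative
  have hA : HasDerivAt (fun t : ℝ => mlrt n (m + 1) c k f x (ω + t • (Pi.single p 1 : Fin n → ℝ)))
      (∑ i : Fin (m + 1) → Fin (n + 1),
        ((∑ j, (∏ l ∈ univ.erase j, ((u (i l) : ℝ) : ℂ)) * ((v1 (i j) : ℝ) : ℂ)) * I0 i
          + (∏ j, ((u (i j) : ℝ) : ℂ)) * Jd i)) 0 := by
    have hfun : (fun t : ℝ => mlrt n (m + 1) c k f x (ω + t • (Pi.single p 1 : Fin n → ℝ)))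
        = fun t : ℝ => ∑ i : Fin (m + 1) → Fin (n + 1),
            (∏ j, (((u + t • v1) (i j) : ℝ) : ℂ)) *
              ∫ s : ℝ, (s : ℂ) ^ k * f i (x + s • (u + t • v1)) := by
      funext t
      simp only [mlrt, hld t]
    rw [hfun]
    refine HasDerivAt.fun_sum fun i _ => ?_
    have h := (hPder i).mul (hIder i)
    have hP0 : (∏ j, (((u + (0:ℝ) • v1) (i j) : ℝ) : ℂ)) = ∏ j, ((u (i j) : ℝ) : ℂ) := by
      refine Finset.prod_congr rfl fun j _ => ?_
      simp
    have hI00 : (∫ s : ℝ, (s : ℂ) ^ k * f i (x + s • (u + (0:ℝ) • v1))) = I0 i := by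
      simp [hI0]
    rw [hP0, hI00] at h
    exact h
  -- full x-derivative
  have hB : HasDerivAt (fun t : ℝ => mlrt n (m + 1) c (k + 1) f (x + t • v1) ω)
      (∑ i : Fin (m + 1) → Fin (n + 1), (∏ j, ((u (i j) : ℝ) : ℂ)) * Jd' i) 0 := by
    have hfun : (fun t : ℝ => mlrt n (m + 1) c (k + 1) f (x + t • v1) ω)
        = fun t : ℝ => ∑ i : Fin (m + 1) → Fin (n + 1),
            (∏ j, ((u (i j) : ℝ) : ℂ)) *
              ∫ s : ℝ, (s : ℂ) ^ (k + 1) * f i (x + t • v1 + s • u) := by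
      funext t
      simp only [mlrt, hu]
    rw [hfun]
    exact HasDerivAt.fun_sum fun i _ => (hBder i).const_mul _
  -- identify the line derivatives
  have hLA : lineDeriv ℝ (fun w => mlrt n (m + 1) c k f x w) ω (Pi.single p 1)
      = ∑ i : Fin (m + 1) → Fin (n + 1),
        ((∑ j, (∏ l ∈ univ.erase j, ((u (i l) : ℝ) : ℂ)) * ((v1 (i j) : ℝ) : ℂ)) * I0 i
          + (∏ j, ((u (i j) : ℝ) : ℂ)) * Jd i) := hA.deriv
  have hLB : lineDeriv ℝ (fun y => mlrt n (m + 1) c (k + 1) f y ω) x (Pi.single p.succ 1)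
      = ∑ i : Fin (m + 1) → Fin (n + 1), (∏ j, ((u (i j) : ℝ) : ℂ)) * Jd' i := hB.deriv
  rw [hLA, hLB, ← Finset.sum_sub_distrib]
  have hcancel : ∀ i : Fin (m + 1) → Fin (n + 1),
      ((∑ j, (∏ l ∈ univ.erase j, ((u (i l) : ℝ) : ℂ)) * ((v1 (i j) : ℝ) : ℂ)) * I0 i
          + (∏ j, ((u (i j) : ℝ) : ℂ)) * Jd i)
        - (∏ j, ((u (i j) : ℝ) : ℂ)) * Jd' i
      = (∑ j, (∏ l ∈ univ.erase j, ((u (i l) : ℝ) : ℂ)) * ((v1 (i j) : ℝ) : ℂ)) * I0 i := by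
    intro i
    rw [hJeq i]
    ring
  simp_rw [hcancel]
  -- combinatorial identity
  have hvq : ∀ l, v1 l = if l = p.succ then 1 else 0 := by
    intro l
    simp [hv1, Pi.single_apply]
  have hG : ∀ (σ : Equiv.Perm (Fin (m + 1))) (i : Fin (m + 1) → Fin (n + 1)),
      I0 (i ∘ σ) = I0 i := by
    intro σ i
    simp only [hI0, hsym σ i]
  have := comb (fun l => ((u l : ℝ) : ℂ)) p.succ v1 hvq I0 hG
  rw [this]
  congr 1
end
end
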